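/- arXiv:1504.02122 — 9 statements merged into one kernel-verified Lean document; each statement's English description precedes it below -/
import Mathlib

section
/- Let G be a graph with an assignment of lists L to its edges, and let v1v2 and w1w2 be two non-adjacent edges of G. If |L(v1v2)|·|L(w1w2)| > Σ_{v_i w_j ∈ E(G)} ⌊|L(v_i w_j)|/2⌋·⌈|L(v_i w_j)|/2⌉ (sum over the at most four edges v_i w_j with i,j ∈ {1,2}), then there exist colours c1 ∈ L(v1v2) and c2 ∈ L(w1w2) that are compatible, i.e. either c1 = c2 or every edge g adjacent to both v1v2 and w1w2 has at most one of c1, c2 in its list L(g). -/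
open SimpleGraph Sum

/-- Two edges of `G` are adjacent if they are distinct edges sharing a vertex. -/
def EdgeAdj {V : Type*} (G : SimpleGraph V) (e f : Sym2 V) : Prop :=
  e ∈ G.edgeSet ∧ f ∈ G.edgeSet ∧ e ≠ f ∧ ∃ v, v ∈ e ∧ v ∈ f

/-- A proper edge-colouring of `G` choosing each edge's colour from its list. -/
def IsListEdgeColoring {V : Type*} (G : SimpleGraph V) (L : Sym2 V → Finset ℕ)
    (C : Sym2 V → ℕ) : Prop :=
  (∀ e ∈ G.edgeSet, C e ∈ L e) ∧ ∀ e f, EdgeAdj G e f → C e ≠ C f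

/-!
Suppose no pair of colours is compatible. Then the lists `A = L(v₁v₂)` and `B = L(w₁w₂)` are
disjoint, and every pair `(c₁, c₂) ∈ A × B` is blocked by a connecting edge `g = vᵢwⱼ` with
`c₁, c₂ ∈ L(g)`, i.e. lies in the rectangle `(A ∩ L(g)) × (B ∩ L(g))`. Since `A` and `B` are
disjoint, the two sides of this rectangle have total size at most `|L(g)|`, so its area is at most
`⌊|L(g)|/2⌋·⌈|L(g)|/2⌉`. The four rectangles cover `A × B`, contradicting the hypothesis.
-/

open Finset

theorem Nat.mul_le_div_two_mul_add_one_div_two {a b n : ℕ} (h : a + b ≤ n) :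
    a * b ≤ n / 2 * ((n + 1) / 2) := by
  have h4 : 4 * (a * b) ≤ n * n := by
    nlinarith [sq_nonneg ((a : ℤ) - b)]
  obtain ⟨q, rfl | rfl⟩ : ∃ q, n = 2 * q ∨ n = 2 * q + 1 := ⟨n / 2, by omega⟩
  · rw [show 2 * q / 2 = q by omega, show (2 * q + 1) / 2 = q by omega]
    nlinarith
  · rw [show (2 * q + 1) / 2 = q by omega, show (2 * q + 1 + 1) / 2 = q + 1 by omega]
    nlinarith

theorem Finset.card_inter_product_inter_le {α : Type*} [DecidableEq α] {A B : Finset α}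
    (hAB : Disjoint A B) (S : Finset α) :
    #((A ∩ S) ×ˢ (B ∩ S)) ≤ #S / 2 * ((#S + 1) / 2) := by
  rw [card_product]
  apply Nat.mul_le_div_two_mul_add_one_div_two
  rw [← card_union_of_disjoint (hAB.mono inter_subset_left inter_subset_left)]
  exact card_le_card (union_subset inter_subset_right inter_subset_right)

theorem exists_eq_mk_of_edgeAdj_of_edgeAdj {V : Type*} {G : SimpleGraph V} {v₁ v₂ w₁ w₂ : V}
    (hne : v₁ ≠ w₁ ∧ v₁ ≠ w₂ ∧ v₂ ≠ w₁ ∧ v₂ ≠ w₂) {g : Sym2 V}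
    (hgv : EdgeAdj G g s(v₁, v₂)) (hgw : EdgeAdj G g s(w₁, w₂)) :
    ∃ x y, (x = v₁ ∨ x = v₂) ∧ (y = w₁ ∨ y = w₂) ∧ G.Adj x y ∧ g = s(x, y) := by
  obtain ⟨hg, -, -, x, hxg, hx⟩ := hgv
  obtain ⟨-, -, -, y, hyg, hy⟩ := hgw
  rw [Sym2.mem_iff] at hx hy
  have hxy : x ≠ y := by
    rcases hx with rfl | rfl <;> rcases hy with rfl | rfl <;> tauto
  obtain rfl : g = s(x, y) := (Sym2.mem_and_mem_iff hxy).mp ⟨hxg, hyg⟩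
  exact ⟨x, y, hx, hy, hg, rfl⟩

theorem stmt0_general {V : Type*} (G : SimpleGraph V) [DecidableRel G.Adj]
    (L : Sym2 V → Finset ℕ) (v₁ v₂ w₁ w₂ : V)
    (hne : v₁ ≠ w₁ ∧ v₁ ≠ w₂ ∧ v₂ ≠ w₁ ∧ v₂ ≠ w₂)
    (hineq :
      (if G.Adj v₁ w₁ then (L s(v₁, w₁)).card / 2 * (((L s(v₁, w₁)).card + 1) / 2) else 0) +
      (if G.Adj v₁ w₂ then (L s(v₁, w₂)).card / 2 * (((L s(v₁, w₂)).card + 1) / 2) else 0) +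
      (if G.Adj v₂ w₁ then (L s(v₂, w₁)).card / 2 * (((L s(v₂, w₁)).card + 1) / 2) else 0) +
      (if G.Adj v₂ w₂ then (L s(v₂, w₂)).card / 2 * (((L s(v₂, w₂)).card + 1) / 2) else 0)
        < (L s(v₁, v₂)).card * (L s(w₁, w₂)).card) :
    ∃ c₁ ∈ L s(v₁, v₂), ∃ c₂ ∈ L s(w₁, w₂),
      c₁ = c₂ ∨ ∀ g, EdgeAdj G g s(v₁, v₂) → EdgeAdj G g s(w₁, w₂) →
        ¬(c₁ ∈ L g ∧ c₂ ∈ L g) := by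
  by_contra! hcon
  set A := L s(v₁, v₂)
  set B := L s(w₁, w₂)
  have hAB : Disjoint A B := disjoint_left.2 fun c hA hB => (hcon c hA c hB).1 rfl
  let R x y := if G.Adj x y then (A ∩ L s(x, y)) ×ˢ (B ∩ L s(x, y)) else ∅
  have hR x y : #(R x y) ≤
      if G.Adj x y then #(L s(x, y)) / 2 * ((#(L s(x, y)) + 1) / 2) else 0 := by
    unfold R
    split_ifs
    exacts [card_inter_product_inter_le hAB _, le_rfl]
  have hcover : A ×ˢ B ⊆ R v₁ w₁ ∪ R v₁ w₂ ∪ R v₂ w₁ ∪ R v₂ w₂ := by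
    rintro ⟨c₁, c₂⟩ hc
    obtain ⟨hc₁, hc₂⟩ := mem_product.1 hc
    obtain ⟨-, g, hgv, hgw, hg₁, hg₂⟩ := hcon c₁ hc₁ c₂ hc₂
    obtain ⟨x, y, hx, hy, hxy, rfl⟩ := exists_eq_mk_of_edgeAdj_of_edgeAdj hne hgv hgw
    have hmem : (c₁, c₂) ∈ R x y := by
      simp only [R, if_pos hxy, mem_product, mem_inter]
      exact ⟨⟨hc₁, hg₁⟩, hc₂, hg₂⟩
    simp only [mem_union]
    rcases hx with rfl | rfl <;> rcases hy with rfl | rfl <;> tauto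
  refine hineq.not_ge ?_
  calc #A * #B = #(A ×ˢ B) := (card_product A B).symm
    _ ≤ #(R v₁ w₁ ∪ R v₁ w₂ ∪ R v₂ w₁ ∪ R v₂ w₂) := card_le_card hcover
    _ ≤ #(R v₁ w₁) + #(R v₁ w₂) + #(R v₂ w₁) + #(R v₂ w₂) := by
      grw [card_union_le, card_union_le, card_union_le]
    _ ≤ _ := by gcongr ?_ + ?_ + ?_ + ?_ <;> apply hR

/-- Cariolaro-type lemma: if the product of the list sizes of two
non-adjacent edges `v₁v₂`, `w₁w₂` exceeds the sum over the connecting edges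
`vᵢwⱼ` of `⌊|L(vᵢwⱼ)|/2⌋·⌈|L(vᵢwⱼ)|/2⌉`, then there are compatible colours. -/
theorem stmt0 {V : Type*} (G : SimpleGraph V) [DecidableRel G.Adj]
    (L : Sym2 V → Finset ℕ) (v₁ v₂ w₁ w₂ : V)
    (he : G.Adj v₁ v₂) (hf : G.Adj w₁ w₂)
    (hne : v₁ ≠ w₁ ∧ v₁ ≠ w₂ ∧ v₂ ≠ w₁ ∧ v₂ ≠ w₂)
    (hineq :
      (if G.Adj v₁ w₁ then (L s(v₁, w₁)).card / 2 * (((L s(v₁, w₁)).card + 1) / 2) else 0) +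
      (if G.Adj v₁ w₂ then (L s(v₁, w₂)).card / 2 * (((L s(v₁, w₂)).card + 1) / 2) else 0) +
      (if G.Adj v₂ w₁ then (L s(v₂, w₁)).card / 2 * (((L s(v₂, w₁)).card + 1) / 2) else 0) +
      (if G.Adj v₂ w₂ then (L s(v₂, w₂)).card / 2 * (((L s(v₂, w₂)).card + 1) / 2) else 0)
        < (L s(v₁, v₂)).card * (L s(w₁, w₂)).card) :
    ∃ c₁ ∈ L s(v₁, v₂), ∃ c₂ ∈ L s(w₁, w₂),
      c₁ = c₂ ∨ ∀ g, EdgeAdj G g s(v₁, v₂) → EdgeAdj G g s(w₁, w₂) →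
        ¬(c₁ ∈ L g ∧ c₂ ∈ L g) :=
  stmt0_general G L v₁ v₂ w₁ w₂ hne hineq
end

section
/- Let G be a cycle with an assignment of lists L to its edges, where each list has size at least 2. Then there is a proper L-edge-colouring of G unless G is an odd cycle and all lists are identical sets of size exactly 2. -/
/-!
Colour the edges greedily around the cycle, starting with a colour `a` on one edge. Only
the last edge can get stuck, since its colour must avoid both its predecessor's and `a`;
this cannot happen when its list minus `a` still has two colours. If some list `ℓ (i + 1)`
is not contained in its predecessor `ℓ i`, start at `i + 1` with a colour outside `ℓ i`.
Otherwise the inclusions `ℓ (i + 1) ⊆ ℓ i` run round the cycle, so all lists equal one set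
`S`: if `|S| ≥ 3` any start works, and if `|S| = 2` the cycle is even and two colours
alternate.
-/

open SimpleGraph Sum

open scoped Fin.NatCast

theorem isListEdgeColoring_extend {V ι : Type*} {G : SimpleGraph V}
    {L : Sym2 V → Finset ℕ} {E : ι → Sym2 V} (hE : E.Injective)
    (hrange : Set.range E = G.edgeSet) {c : ι → ℕ} (hmem : ∀ i, c i ∈ L (E i))
    (hadj : ∀ i j, EdgeAdj G (E i) (E j) → c i ≠ c j) :
    IsListEdgeColoring G L (Function.extend E c 0) := by
  refine ⟨?_, fun e f hef => ?_⟩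
  · rw [← hrange, Set.forall_mem_range]
    exact fun i => hE.extend_apply c 0 i ▸ hmem i
  · obtain ⟨i, rfl⟩ := hrange.symm ▸ hef.1
    obtain ⟨j, rfl⟩ := hrange.symm ▸ hef.2.1
    rw [hE.extend_apply, hE.extend_apply]
    exact hadj i j hef

theorem exists_path_listColoring (ℓ : ℕ → Finset ℕ) (hℓ : ∀ i, 2 ≤ (ℓ i).card) {a : ℕ}
    (ha : a ∈ ℓ 0) (m : ℕ) :
    ∃ d : ℕ → ℕ, d 0 = a ∧ (∀ i ≤ m, d i ∈ ℓ i) ∧ ∀ i < m, d i ≠ d (i + 1) := by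
  induction m with
  | zero => exact ⟨fun _ => a, rfl, fun i hi => by rwa [Nat.le_zero.mp hi], by simp⟩
  | succ m ih =>
    obtain ⟨d, hd0, hmem, hne⟩ := ih
    obtain ⟨x, hx, hxd⟩ := Finset.exists_mem_ne (hℓ (m + 1)) (d m)
    refine ⟨Function.update d (m + 1) x, by simp [hd0], fun i hi => ?_, fun i hi => ?_⟩
    · rcases (Nat.le_succ_iff.mp hi) with hi | rfl
      · rw [Function.update_of_ne (by omega)]
        exact hmem i hi
      · simpa using hx
    · rw [Function.update_of_ne (by omega)]
      rcases Nat.lt_succ_iff_lt_or_eq.mp hi with hi | rfl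
      · rw [Function.update_of_ne (by omega)]
        exact hne i hi
      · simpa using hxd.symm

def IsCyclicListColoring {n : ℕ} [NeZero n] (ℓ : Fin n → Finset ℕ) (c : Fin n → ℕ) : Prop :=
  (∀ i, c i ∈ ℓ i) ∧ ∀ i, c i ≠ c (i + 1)

theorem IsCyclicListColoring.rotate {n : ℕ} [NeZero n] {ℓ : Fin n → Finset ℕ}
    {c : Fin n → ℕ} (r : Fin n) (hc : IsCyclicListColoring (fun i => ℓ (i + r)) c) :
    IsCyclicListColoring ℓ fun i => c (i - r) := by
  refine ⟨fun i => by simpa using hc.1 (i - r), fun i => ?_⟩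
  dsimp only
  rw [show i + 1 - r = i - r + 1 by abel]
  exact hc.2 (i - r)

theorem isCyclicListColoring_comp_val {n : ℕ} {ℓ : Fin (n + 1) → Finset ℕ} {d : ℕ → ℕ}
    (hmem : ∀ i : Fin (n + 1), d i ∈ ℓ i) (hne : ∀ i < n, d i ≠ d (i + 1))
    (hlast : d n ≠ d 0) :
    IsCyclicListColoring ℓ fun i => d i := by
  refine ⟨hmem, fun i => ?_⟩
  dsimp only
  rw [Fin.val_add_one]
  split_ifs with h
  · simpa [h] using hlast
  · exact hne i (Fin.val_lt_last h)

theorem exists_isCyclicListColoring_of_two_le_card_erase {n : ℕ}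
    (ℓ : Fin (n + 2) → Finset ℕ) (hℓ : ∀ i, 2 ≤ (ℓ i).card) {a : ℕ} (ha : a ∈ ℓ 0)
    (hlast : 2 ≤ ((ℓ (Fin.last (n + 1))).erase a).card) :
    ∃ c, IsCyclicListColoring ℓ c := by
  let ℓN : ℕ → Finset ℕ := fun k =>
    if k = n + 1 then (ℓ (Fin.last (n + 1))).erase a else ℓ k
  have hℓN : ∀ k, 2 ≤ (ℓN k).card := fun k => by
    dsimp only [ℓN]
    split_ifs
    exacts [hlast, hℓ _]
  obtain ⟨d, hd0, hmem, hne⟩ :=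
    exists_path_listColoring ℓN hℓN (by simpa [ℓN] using ha) (n + 1)
  have hdlast : d (n + 1) ∈ (ℓ (Fin.last (n + 1))).erase a := by
    simpa [ℓN] using hmem (n + 1) le_rfl
  refine ⟨_, isCyclicListColoring_comp_val (fun i => ?_) hne
    (hd0 ▸ Finset.ne_of_mem_erase hdlast)⟩
  by_cases hi : i = Fin.last (n + 1)
  · subst hi
    exact Finset.mem_of_mem_erase hdlast
  · have hlt : (i : ℕ) < n + 1 := Fin.val_lt_last hi
    simpa [ℓN, hlt.ne] using hmem i hlt.le

theorem apply_eq_apply_zero_of_forall_add_one_le {α : Type*} [PartialOrder α] {n : ℕ}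
    {ℓ : Fin (n + 1) → α} (h : ∀ i, ℓ (i + 1) ≤ ℓ i) (i : Fin (n + 1)) : ℓ i = ℓ 0 := by
  have hle_zero : ∀ i, ℓ i ≤ ℓ 0 := Fin.induction le_rfl fun i ih =>
    (Fin.coeSucc_eq_succ ▸ h i.castSucc).trans ih
  have hlast_le : ∀ i, ℓ (Fin.last n) ≤ ℓ i := Fin.reverseInduction le_rfl fun i ih =>
    ih.trans (Fin.coeSucc_eq_succ ▸ h i.castSucc)
  exact (hle_zero i).antisymm ((Fin.last_add_one n ▸ h (Fin.last n)).trans (hlast_le i))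

theorem exists_isCyclicListColoring {n : ℕ} (ℓ : Fin (n + 2) → Finset ℕ)
    (hℓ : ∀ i, 2 ≤ (ℓ i).card)
    (hexc : ¬(Odd (n + 2) ∧ (∀ i, (ℓ i).card = 2) ∧ ∀ i j, ℓ i = ℓ j)) :
    ∃ c, IsCyclicListColoring ℓ c := by
  by_cases hsub : ∀ i, ℓ (i + 1) ⊆ ℓ i
  · have hconst := apply_eq_apply_zero_of_forall_add_one_le hsub
    obtain ⟨x, hx, y, hy, hxy⟩ := Finset.one_lt_card.mp (hℓ 0)
    by_cases h3 : 3 ≤ (ℓ 0).card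
    · refine exists_isCyclicListColoring_of_two_le_card_erase ℓ hℓ hx ?_
      rw [hconst, Finset.card_erase_of_mem hx]
      omega
    have heven : Even (n + 2) := by
      refine Nat.not_odd_iff_even.mp fun hodd => hexc ⟨hodd, fun i => ?_, fun i j => ?_⟩
      · rw [hconst i]
        have := hℓ 0
        omega
      · rw [hconst i, hconst j]
    refine ⟨_, isCyclicListColoring_comp_val (d := fun k => if Even k then x else y)
      (fun i => ?_) (fun k _ => ?_) ?_⟩
    · rw [hconst]
      split_ifs <;> assumption
    · by_cases hk : Even k <;> simp [hk, Nat.even_add_one, hxy, hxy.symm]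
    · simpa [Nat.even_add_one, hxy.symm] using heven
  · obtain ⟨r, hr⟩ := not_forall.mp hsub
    obtain ⟨a, ha, har⟩ := Finset.not_subset.mp hr
    have hlast : Fin.last (n + 1) + (r + 1) = r := by
      rw [add_comm r, ← add_assoc, Fin.last_add_one, zero_add]
    obtain ⟨c, hc⟩ := exists_isCyclicListColoring_of_two_le_card_erase
      (fun i => ℓ (i + (r + 1))) (fun i => hℓ _) (a := a) (by simpa using ha)
      (by rw [hlast, Finset.erase_eq_of_notMem har]; exact hℓ r)
    exact ⟨_, hc.rotate _⟩

theorem eq_add_one_or_eq_add_one_of_mem_of_mem {α : Type*} [Add α] [One α]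
    [IsRightCancelAdd α] {i j v : α} (hne : s(i, i + 1) ≠ s(j, j + 1)) (hi : v ∈ s(i, i + 1))
    (hj : v ∈ s(j, j + 1)) : j = i + 1 ∨ i = j + 1 := by
  rw [Sym2.mem_iff] at hi hj
  rcases hi with rfl | rfl <;> rcases hj with h | h
  · exact absurd (h ▸ rfl) hne
  · exact .inr h
  · exact .inl h.symm
  · exact absurd (add_right_cancel h ▸ rfl) hne

theorem cycleGraph_edgeSet_eq_range (n : ℕ) :
    (cycleGraph (n + 2)).edgeSet = Set.range fun i : Fin (n + 2) => s(i, i + 1) := by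
  refine Set.ext (Sym2.ind fun u v => ?_)
  simp only [mem_edgeSet, cycleGraph_adj, sub_eq_iff_eq_add', Set.mem_range, Sym2.eq_iff]
  constructor
  · rintro (rfl | rfl)
    exacts [⟨v, .inr ⟨rfl, rfl⟩⟩, ⟨u, .inl ⟨rfl, rfl⟩⟩]
  · rintro ⟨y, ⟨rfl, rfl⟩ | ⟨rfl, rfl⟩⟩
    exacts [.inr rfl, .inl rfl]

theorem injective_sym2_mk_add_one (n : ℕ) :
    Function.Injective fun i : Fin (n + 3) => s(i, i + 1) := by
  intro i j h
  rcases Sym2.eq_iff.mp h with ⟨h, -⟩ | ⟨rfl, h⟩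
  · exact h
  · have : (2 : Fin (n + 3)) = 0 :=
      add_left_cancel (a := j) (by rw [add_zero, ← one_add_one_eq_two, ← add_assoc, h])
    simp [Fin.ext_iff, Nat.mod_eq_of_lt (show 2 < n + 3 by omega)] at this

/-- a cycle with lists of size at least 2 on its edges has a proper
list edge-colouring, unless it is an odd cycle whose lists are all identical of
size exactly 2. -/
theorem stmt1 (n : ℕ) (hn : 3 ≤ n) (L : Sym2 (Fin n) → Finset ℕ)
    (hL : ∀ e ∈ (SimpleGraph.cycleGraph n).edgeSet, 2 ≤ (L e).card)
    (hexc : ¬(Odd n ∧ (∀ e ∈ (SimpleGraph.cycleGraph n).edgeSet, (L e).card = 2) ∧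
      ∀ e ∈ (SimpleGraph.cycleGraph n).edgeSet,
        ∀ f ∈ (SimpleGraph.cycleGraph n).edgeSet, L e = L f)) :
    ∃ C, IsListEdgeColoring (SimpleGraph.cycleGraph n) L C := by
  obtain ⟨m, rfl⟩ : ∃ m, n = m + 3 := ⟨n - 3, by omega⟩
  have hrange := (cycleGraph_edgeSet_eq_range (m + 1)).symm
  rw [← hrange] at hL hexc
  simp only [Set.forall_mem_range] at hL hexc
  obtain ⟨c, hmem, hne⟩ := exists_isCyclicListColoring _ hL hexc
  refine ⟨_, isListEdgeColoring_extend (injective_sym2_mk_add_one m) hrange hmem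
    fun i j ⟨_, _, hij, _, hvi, hvj⟩ => ?_⟩
  rcases eq_add_one_or_eq_add_one_of_mem_of_mem hij hvi hvj with rfl | rfl
  exacts [hne i, (hne j).symm]
end

section
/- Let G be a graph consisting of a cycle with edges e1, …, en (in cyclic order) together with one additional pendant edge f incident exactly to the common vertex of e1 and en. If L is a list assignment where each list has size at least 2 and |L(e1)| ≥ 3, then G has a proper L-edge-colouring. -/
open SimpleGraph Sum

/-- A default choice from a finite set. -/
def pickc (s : Finset ℕ) : ℕ := if h : s.Nonempty then s.min' h else 0

lemma pickc_mem {s : Finset ℕ} (h : s.Nonempty) : pickc s ∈ s := by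
  rw [pickc, dif_pos h]; exact s.min'_mem h

lemma sdiff_nonempty_of_card_lt {s t : Finset ℕ} (h : t.card < s.card) :
    (s \ t).Nonempty := by
  rw [← Finset.card_pos]
  have := Finset.le_card_sdiff t s
  omega

/-- Greedy chain colouring: each colour is chosen in its list avoiding the previous one. -/
def chainc (M : ℕ → Finset ℕ) (a : ℕ) : ℕ → ℕ
  | 0 => a
  | (i+1) => pickc (M (i+1) \ {chainc M a i})

lemma chainc_mem {M : ℕ → Finset ℕ} {a : ℕ} {i : ℕ} (h : 2 ≤ (M (i+1)).card) :
    chainc M a (i+1) ∈ M (i+1) ∧ chainc M a (i+1) ≠ chainc M a i := by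
  have hne : (M (i+1) \ {chainc M a i}).Nonempty := by
    apply sdiff_nonempty_of_card_lt
    simp only [Finset.card_singleton]; omega
  have := pickc_mem hne
  rw [Finset.mem_sdiff, Finset.mem_singleton] at this
  exact ⟨by simpa [chainc] using this.1, by simpa [chainc] using this.2⟩

/-- The key combinatorial lemma: list-colouring a cycle of length `n ≥ 3` with all lists
of size `≥ 2` and the first list of size `≥ 3`, together with a pendant colour `cf`
from `Lf` distinct from the colours of the first and last cycle edges. -/
lemma cyc_color (n : ℕ) (hn : 3 ≤ n) (M : ℕ → Finset ℕ) (Lf : Finset ℕ)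
    (hM : ∀ i < n, 2 ≤ (M i).card) (hM0 : 3 ≤ (M 0).card) (hLf : 2 ≤ Lf.card) :
    ∃ (d : ℕ → ℕ) (cf : ℕ), (∀ i < n, d i ∈ M i) ∧ (∀ i, i + 1 < n → d i ≠ d (i + 1)) ∧
      d (n - 1) ≠ d 0 ∧ cf ∈ Lf ∧ cf ≠ d 0 ∧ cf ≠ d (n - 1) := by
  obtain ⟨p, hp, q, hq, hpq⟩ := Finset.one_lt_card.mp hLf
  by_cases hcase : ∃ x ∈ M (n-1), x ∉ ({p, q} : Finset ℕ)
  · -- backward greedy from the last edge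
    obtain ⟨x, hx, hxpq⟩ := hcase
    set g : ℕ → ℕ := chainc (fun j => M (n-1-j)) x with hg
    have hgmem : ∀ j, j + 1 ≤ n - 1 → g (j+1) ∈ M (n-1-(j+1)) ∧ g (j+1) ≠ g j := by
      intro j hj
      exact chainc_mem (hM _ (by omega))
    set w : ℕ := pickc (M 0 \ {g (n-2), x}) with hw
    have hwmem : w ∈ M 0 ∧ w ≠ g (n-2) ∧ w ≠ x := by
      have hne : (M 0 \ {g (n-2), x}).Nonempty := by
        apply sdiff_nonempty_of_card_lt
        have := Finset.card_insert_le (g (n-2)) ({x} : Finset ℕ)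
        simp only [Finset.card_singleton] at this
        omega
      have := pickc_mem hne
      rw [Finset.mem_sdiff, Finset.mem_insert, Finset.mem_singleton] at this
      exact ⟨this.1, fun h => this.2 (Or.inl h), fun h => this.2 (Or.inr h)⟩
    refine ⟨fun i => if i = 0 then w else g (n-1-i), pickc ({p, q} \ {w}), ?_, ?_, ?_, ?_, ?_, ?_⟩
    · intro i hi
      rcases Nat.eq_zero_or_pos i with h0 | h0
      · simp [h0, hwmem.1]
      · have hi' : i ≠ 0 := by omega
        simp only [hi', if_false]
        rcases Nat.lt_or_ge i (n-1) with hlt | hge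
        · have : n - 1 - i = (n - 2 - i) + 1 := by omega
          rw [this]
          have := (hgmem (n-2-i) (by omega)).1
          have h2 : n - 1 - ((n-2-i)+1) = i := by omega
          rwa [h2] at this
        · have : i = n - 1 := by omega
          subst this
          have : n - 1 - (n-1) = 0 := by omega
          rw [this]
          simpa [hg, chainc] using hx
    · intro i hi
      rcases Nat.eq_zero_or_pos i with h0 | h0
      · subst h0
        have h1 : (1 : ℕ) ≠ 0 := one_ne_zero
        simp only [if_pos rfl, h1, if_false]
        have : n - 1 - 1 = n - 2 := by omega
        rw [this]
        exact hwmem.2.1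
      · have hi' : i ≠ 0 := by omega
        have hi1 : i + 1 ≠ 0 := by omega
        simp only [hi', hi1, if_false]
        have h1 : n - 1 - i = (n - 1 - (i+1)) + 1 := by omega
        rw [h1]
        exact (hgmem (n-1-(i+1)) (by omega)).2
    · have hn1 : n - 1 ≠ 0 := by omega
      simp only [hn1, if_false, if_pos rfl]
      have : n - 1 - (n-1) = 0 := by omega
      rw [this]
      have : g 0 = x := rfl
      rw [this]
      exact fun h => hwmem.2.2 h.symm
    · have hne : (({p, q} : Finset ℕ) \ {w}).Nonempty := by
        apply sdiff_nonempty_of_card_lt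
        rw [Finset.card_pair hpq]
        simp
      have := pickc_mem hne
      rw [Finset.mem_sdiff] at this
      rcases Finset.mem_insert.mp this.1 with h | h
      · rw [h]; exact hp
      · rw [Finset.mem_singleton.mp h]; exact hq
    · have hne : (({p, q} : Finset ℕ) \ {w}).Nonempty := by
        apply sdiff_nonempty_of_card_lt
        rw [Finset.card_pair hpq]
        simp
      have := pickc_mem hne
      rw [Finset.mem_sdiff, Finset.mem_singleton] at this
      simpa using this.2
    · have hne : (({p, q} : Finset ℕ) \ {w}).Nonempty := by
        apply sdiff_nonempty_of_card_lt
        rw [Finset.card_pair hpq]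
        simp
      have := pickc_mem hne
      rw [Finset.mem_sdiff] at this
      have hn1 : n - 1 ≠ 0 := by omega
      simp only [hn1, if_false]
      have h0 : n - 1 - (n-1) = 0 := by omega
      rw [h0]
      have hgx : g 0 = x := rfl
      rw [hgx]
      intro h
      rw [h] at this
      exact hxpq this.1
  · -- forward greedy from the first edge
    push_neg at hcase
    have hsub : M (n-1) ⊆ {p, q} := fun x hx => hcase x hx
    have hzne : (M 0 \ {p, q}).Nonempty := by
      apply sdiff_nonempty_of_card_lt
      have := Finset.card_insert_le p ({q} : Finset ℕ)
      simp only [Finset.card_singleton] at this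
      omega
    set z : ℕ := pickc (M 0 \ {p, q}) with hz
    have hzmem : z ∈ M 0 ∧ z ∉ ({p, q} : Finset ℕ) := by
      have := pickc_mem hzne
      rw [Finset.mem_sdiff] at this
      exact this
    set d : ℕ → ℕ := chainc M z with hd
    have hd0 : d 0 = z := rfl
    have hdmem : ∀ i, i + 1 < n → d (i+1) ∈ M (i+1) ∧ d (i+1) ≠ d i := by
      intro i hi
      exact chainc_mem (hM _ hi)
    have hdn1 : d (n-1) ∈ M (n-1) := by
      have h1 : n - 1 = (n-2) + 1 := by omega
      rw [h1]
      exact (hdmem (n-2) (by omega)).1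
    refine ⟨d, pickc ({p, q} \ {d (n-1)}), ?_, ?_, ?_, ?_, ?_, ?_⟩
    · intro i hi
      rcases Nat.eq_zero_or_pos i with h0 | h0
      · subst h0; rw [hd0]; exact hzmem.1
      · have h1 : i = (i-1) + 1 := by omega
        rw [h1]
        exact (hdmem (i-1) (by omega)).1
    · intro i hi
      exact ((hdmem i hi).2).symm
    · intro h
      apply hzmem.2
      rw [← hd0, ← h]
      exact hsub hdn1
    all_goals {
      have hne : (({p, q} : Finset ℕ) \ {d (n-1)}).Nonempty := by
        apply sdiff_nonempty_of_card_lt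
        rw [Finset.card_pair hpq]
        simp
      have hm := pickc_mem hne
      rw [Finset.mem_sdiff, Finset.mem_singleton] at hm
      first
      | · rcases Finset.mem_insert.mp hm.1 with h | h
          · rw [h]; exact hp
          · rw [Finset.mem_singleton.mp h]; exact hq
      | · intro h
          apply hzmem.2
          rw [← hd0, ← h]
          exact hm.1
      | exact hm.2
    }

/-- a cycle `0,1,…,n-1` (edges `eᵢ = s(i-1, i mod n)`) together with a
pendant edge `f = s(0,n)` at the common vertex `0` of `e₁ = s(0,1)` and
`eₙ = s(n-1,0)`.  If all lists have size at least 2 and `|L(e₁)| ≥ 3`, then the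
graph has a proper list edge-colouring. -/
theorem stmt3 (n : ℕ) (hn : 3 ≤ n)
    (G : SimpleGraph ℕ)
    (hG : G = SimpleGraph.fromEdgeSet
      ({e | ∃ i < n, e = s(i, (i + 1) % n)} ∪ {s(0, n)}))
    (L : Sym2 ℕ → Finset ℕ)
    (hL : ∀ e ∈ G.edgeSet, 2 ≤ (L e).card)
    (hL1 : 3 ≤ (L s(0, 1)).card) :
    ∃ C, IsListEdgeColoring G L C := by
  subst hG
  -- basic mod arithmetic helper
  have hmod : ∀ i, i < n → ((i+1) % n = i+1 ∧ i+1 < n) ∨ (i = n-1 ∧ (i+1) % n = 0) := by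
    intro i hi
    rcases Nat.lt_or_ge (i+1) n with h | h
    · exact Or.inl ⟨Nat.mod_eq_of_lt h, h⟩
    · have : i + 1 = n := by omega
      right
      refine ⟨by omega, ?_⟩
      rw [this, Nat.mod_self]
  have hmodlt : ∀ i, i < n → (i+1) % n < n := fun i _ => Nat.mod_lt _ (by omega)
  -- characterisation of the edge set
  have hedge : ∀ e, e ∈ (SimpleGraph.fromEdgeSet
      ({e | ∃ i < n, e = s(i, (i + 1) % n)} ∪ {s(0, n)})).edgeSet ↔
      ((∃ i < n, e = s(i, (i + 1) % n)) ∨ e = s(0, n)) := by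
    intro e
    rw [SimpleGraph.edgeSet_fromEdgeSet]
    constructor
    · rintro ⟨h1, _⟩
      exact h1
    · rintro h
      refine ⟨h, ?_⟩
      rcases h with ⟨i, hi, rfl⟩ | rfl
      · simp only [Set.mem_setOf_eq, Sym2.mem_diagSet, Sym2.mk_isDiag_iff]
        rcases hmod i hi with ⟨h1, h2⟩ | ⟨h1, h2⟩ <;> omega
      · simp only [Set.mem_setOf_eq, Sym2.mem_diagSet, Sym2.mk_isDiag_iff]
        omega
  -- set up lists indexed by cycle edges
  have hE0 : s(0, (0 + 1) % n) = s(0, 1) := by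
    rw [Nat.mod_eq_of_lt (show 0 + 1 < n by omega)]
  obtain ⟨d, cf, hd, hchain, hlast, hcfmem, hcf0, hcfn⟩ :=
    cyc_color n hn (fun i => L s(i, (i + 1) % n)) (L s(0, n))
      (fun i hi => hL _ ((hedge _).2 (Or.inl ⟨i, hi, rfl⟩)))
      (by simpa [hE0] using hL1)
      (hL _ ((hedge _).2 (Or.inr rfl)))
  -- the colouring function
  set minS : Sym2 ℕ → ℕ := Sym2.lift ⟨fun a b => min a b, fun a b => min_comm a b⟩ with hminS
  set C : Sym2 ℕ → ℕ := fun e =>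
    if e = s(0, n) then cf else if e = s(0, n - 1) then d (n - 1) else d (minS e) with hC
  have hCf : C s(0, n) = cf := by simp [hC]
  have hCE : ∀ i, i < n → C s(i, (i + 1) % n) = d i := by
    intro i hi
    rcases hmod i hi with ⟨h1, h2⟩ | ⟨h1, h2⟩
    · rw [h1]
      have e1 : s(i, i+1) ≠ s(0, n) := by
        rw [Ne, Sym2.eq_iff]; omega
      have e2 : s(i, i+1) ≠ s(0, n-1) := by
        rw [Ne, Sym2.eq_iff]; omega
      rw [hC]
      simp only [e1, e2, if_false]
      have : minS s(i, i+1) = i := by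
        rw [hminS, Sym2.lift_mk]
        exact inf_eq_left.mpr (by omega)
      rw [this]
    · subst h1
      rw [h2]
      have e1 : s(n-1, 0) ≠ s(0, n) := by
        rw [Ne, Sym2.eq_iff]; omega
      have e2 : s(n-1, 0) = s(0, n-1) := by
        rw [Sym2.eq_iff]; omega
      rw [hC]
      simp only [e1, if_false, e2, if_true]
      rw [if_neg (show ¬s(0, n-1) = s(0, n) by rw [Sym2.eq_iff]; omega)]
  -- key adjacency fact for consecutive cycle edges
  have key : ∀ i, i < n → ∀ j, j < n → (i+1) % n = j → d i ≠ d j := by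
    intro i hi j hj hij
    rcases hmod i hi with ⟨h1, h2⟩ | ⟨h1, h2⟩
    · have : j = i + 1 := by omega
      subst this
      exact hchain i h2
    · have : j = 0 := by omega
      subst this
      rw [h1]
      exact hlast
  -- injectivity of i ↦ (i+1) % n below n
  have hinj : ∀ i, i < n → ∀ j, j < n → (i+1) % n = (j+1) % n → i = j := by
    intro i hi j hj h
    rcases hmod i hi with ⟨a1, a2⟩ | ⟨a1, a2⟩ <;> rcases hmod j hj with ⟨b1, b2⟩ | ⟨b1, b2⟩ <;> omega
  refine ⟨C, ?_, ?_⟩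
  · intro e he
    rcases (hedge e).1 he with ⟨i, hi, rfl⟩ | rfl
    · rw [hCE i hi]
      exact hd i hi
    · rw [hCf]
      exact hcfmem
  · rintro e f ⟨he, hf, hef, v, hve, hvf⟩
    rcases (hedge e).1 he with ⟨i, hi, rfl⟩ | rfl <;>
      rcases (hedge f).1 hf with ⟨j, hj, rfl⟩ | rfl
    · -- two cycle edges
      rw [hCE i hi, hCE j hj]
      rw [Sym2.mem_iff] at hve hvf
      have hne : i ≠ j := by
        intro h
        subst h
        exact hef rfl
      rcases hve with rfl | rfl
      · rcases hvf with rfl | h2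
        · exact absurd rfl hne
        · exact (key j hj _ hi h2.symm).symm
      · rcases hvf with h2 | h2
        · exact key i hi j hj (h2.symm ▸ rfl)
        · exact absurd (hinj i hi j hj (by omega)) hne
    · -- cycle edge and pendant edge
      rw [hCE i hi, hCf]
      rw [Sym2.mem_iff] at hve hvf
      have hv0 : v = 0 := by
        have := hmodlt i hi
        rcases hve with rfl | rfl <;> rcases hvf with h | h <;> omega
      subst hv0
      rcases hve with h | h
      · rw [← h]
        exact hcf0.symm
      · have : i = n - 1 := by
          rcases hmod i hi with ⟨a1, a2⟩ | ⟨a1, a2⟩ <;> omega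
        rw [this]
        exact hcfn.symm
    · -- pendant edge and cycle edge
      rw [hCE j hj, hCf]
      rw [Sym2.mem_iff] at hve hvf
      have hv0 : v = 0 := by
        have := hmodlt j hj
        rcases hvf with rfl | rfl <;> rcases hve with h | h <;> omega
      subst hv0
      rcases hvf with h | h
      · rw [← h]
        exact hcf0
      · have : j = n - 1 := by
          rcases hmod j hj with ⟨a1, a2⟩ | ⟨a1, a2⟩ <;> omega
        rw [this]
        exact hcfn
    · exact absurd rfl hef
end

section
/- Let G be a graph consisting of two cycles sharing exactly one vertex v, with edge sets {g1,…,gn} and {f1,…,fm} in cyclic order, where g1, gn, f1, fm are all incident to v. If L is a list assignment with every list of size at least 2 and |L(gn)| ≥ 4 and |L(fm)| ≥ 4, then G has a proper L-edge-colouring. -/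
/-!
At the shared vertex `0` the four edges `g₁, gₙ, f₁, fₘ` need distinct colours; the rest of the
graph consists of the paths `g₂ ⋯ gₙ₋₁` and `f₂ ⋯ fₘ₋₁`, whose lists have at least two colours.
Call `(σ, τ)` an obstruction for such a path if no colouring of it has its first edge avoiding `σ`
and its last edge avoiding `τ`. Induction along the path shows that obstructions are rigid: `σ`
determines `τ`, and obstructions `(σ, τ)`, `(σ', τ')` with `σ ≠ σ'` have `{τ, τ'} = {σ, σ'}`,
because an obstruction forces every list to be a pair. Now pick distinct `b ∈ L(g₁)`, `c ∈ L(f₁)`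
and try to complete with `d ∈ L(gₙ)`, `e ∈ L(fₘ)`. If this fails, `b` and `c` have obstructions
outside `{b, c}`, and `b ∈ L(fₘ)`, `c ∈ L(gₙ)`; rigidity then shows that replacing `b` or `c` by
the other colour of its list leaves a completion.
-/

open SimpleGraph Sum

/-- Vertices of the second cycle of the figure-eight graph: `bv n 0 = 0` is the
shared vertex, and `bv n j = n + j - 1` for `1 ≤ j`. -/
def bv (n j : ℕ) : ℕ := if j = 0 then 0 else n + j - 1

open Finset

section Obstructions

variable {α : Type*}

/-- `¬P σ τ` says that `(σ, τ)` is an obstruction. -/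
structure RigidObstructions (P : α → α → Prop) : Prop where
  unique : ∀ {σ τ τ'}, ¬P σ τ → ¬P σ τ' → τ = τ'
  swap : ∀ {σ σ' τ τ'}, σ ≠ σ' → ¬P σ τ → ¬P σ' τ' → τ = σ ∧ τ' = σ' ∨ τ = σ' ∧ τ' = σ

theorem eq_of_pair_eq_pair [DecidableEq α] {a b a' b' : α} (h : ({a, b} : Finset α) = {a', b'})
    (ha : a ≠ a') : a = b' ∧ a' = b := by
  have h₁ : a ∈ ({a', b'} : Finset α) := h ▸ mem_insert_self a {b}
  have h₂ : a' ∈ ({a, b} : Finset α) := h ▸ mem_insert_self a' {b'}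
  simp only [mem_insert, mem_singleton] at h₁ h₂
  tauto

section PathColoring

variable (M : ℕ → Finset α)

/-- Edge `x`, for `i ≤ x ≤ j`, of a path has list `M x`; `σ` and `τ` are the colours of the edges
attached at its two ends. -/
def PathColorable (i j : ℕ) (σ τ : α) : Prop :=
  ∃ p : ℕ → α, (∀ x, i ≤ x → x ≤ j → p x ∈ M x) ∧ (∀ x, i ≤ x → x < j → p x ≠ p (x + 1)) ∧
    p i ≠ σ ∧ p j ≠ τ

variable {M} {i j : ℕ} {σ σ' τ τ' : α}

theorem pathColorable_self_iff : PathColorable M i i σ τ ↔ ∃ t ∈ M i, t ≠ σ ∧ t ≠ τ := by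
  constructor
  · rintro ⟨p, hp, -, hσ, hτ⟩
    exact ⟨p i, hp i le_rfl le_rfl, hσ, hτ⟩
  · rintro ⟨t, ht, hσ, hτ⟩
    refine ⟨fun _ => t, fun x hix hxi => ?_, fun x hix hxi => by omega, hσ, hτ⟩
    rwa [le_antisymm hxi hix]

theorem pathColorable_succ_iff (hij : i ≤ j) :
    PathColorable M i (j + 1) σ τ ↔ ∃ t ∈ M (j + 1), t ≠ τ ∧ PathColorable M i j σ t := by
  constructor
  · rintro ⟨p, hp, hadj, hσ, hτ⟩
    exact ⟨p (j + 1), hp _ (by omega) le_rfl, hτ, p, fun x hix hxj => hp x hix (by omega),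
      fun x hix hxj => hadj x hix (by omega), hσ, hadj j hij (by omega)⟩
  · rintro ⟨t, ht, hτ, p, hp, hadj, hσ, hpt⟩
    refine ⟨fun x => if x ≤ j then p x else t, fun x hix hxj => ?_, fun x hix hxj => ?_,
      by simpa [hij] using hσ, by simpa using hτ⟩
    · by_cases hx : x ≤ j
      · simpa [hx] using hp x hix hx
      · simpa [hx, show x = j + 1 by omega] using ht
    · by_cases hx : x + 1 ≤ j
      · simpa [hx, show x ≤ j by omega] using hadj x hix hx
      · simpa [show x = j by omega] using hpt

variable [DecidableEq α]

theorem eq_pair_of_not_pathColorable_self (hM : 2 ≤ #(M i)) (hτ : ¬PathColorable M i i σ τ) :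
    M i = {σ, τ} := by
  refine eq_of_subset_of_card_le (fun t ht => ?_) (card_le_two.trans hM)
  by_contra hσt
  simp only [mem_insert, mem_singleton, not_or] at hσt
  exact hτ (pathColorable_self_iff.2 ⟨t, ht, hσt⟩)

theorem pathColorable_or (hM : ∀ x, i ≤ x → x ≤ j → 2 ≤ #(M x)) (hij : i ≤ j) (hτ : τ ≠ τ') :
    PathColorable M i j σ τ ∨ PathColorable M i j σ τ' := by
  induction j, hij using Nat.le_induction generalizing τ τ' with
  | base =>
    obtain ⟨t, ht, htσ⟩ := exists_mem_ne (hM i le_rfl le_rfl) σ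
    simp only [pathColorable_self_iff]
    by_cases htτ : t = τ
    · exact .inr ⟨t, ht, htσ, htτ ▸ hτ⟩
    · exact .inl ⟨t, ht, htσ, htτ⟩
  | succ j hij ih =>
    obtain ⟨t₁, ht₁, t₂, ht₂, ht⟩ := one_lt_card.1 (hM (j + 1) (by omega) le_rfl)
    simp only [pathColorable_succ_iff hij]
    have key : ∀ t ∈ M (j + 1), PathColorable M i j σ t →
        (∃ t ∈ M (j + 1), t ≠ τ ∧ PathColorable M i j σ t) ∨
          ∃ t ∈ M (j + 1), t ≠ τ' ∧ PathColorable M i j σ t := fun t ht h => by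
      by_cases htτ : t = τ
      · exact .inr ⟨t, ht, htτ ▸ hτ, h⟩
      · exact .inl ⟨t, ht, htτ, h⟩
    rcases ih (fun x hix hxj => hM x hix (by omega)) ht with h | h
    exacts [key t₁ ht₁ h, key t₂ ht₂ h]

theorem eq_of_not_pathColorable (hM : ∀ x, i ≤ x → x ≤ j → 2 ≤ #(M x)) (hij : i ≤ j)
    (hτ : ¬PathColorable M i j σ τ) (hτ' : ¬PathColorable M i j σ τ') : τ = τ' := by
  by_contra h
  exact (pathColorable_or hM hij h).elim hτ hτ'

theorem exists_eq_pair_of_not_pathColorable_succ (hM : ∀ x, i ≤ x → x ≤ j + 1 → 2 ≤ #(M x))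
    (hij : i ≤ j) (hτ : ¬PathColorable M i (j + 1) σ τ) :
    ∃ u, ¬PathColorable M i j σ u ∧ M (j + 1) = {u, τ} := by
  have hM' : ∀ x, i ≤ x → x ≤ j → 2 ≤ #(M x) := fun x hix hxj => hM x hix (by omega)
  have hblocked : ∀ t ∈ M (j + 1), t ≠ τ → ¬PathColorable M i j σ t :=
    fun t ht htτ h => hτ ((pathColorable_succ_iff hij).2 ⟨t, ht, htτ, h⟩)
  obtain ⟨u, hu, huτ⟩ := exists_mem_ne (hM (j + 1) (by omega) le_rfl) τ
  refine ⟨u, hblocked u hu huτ, eq_of_subset_of_card_le (fun t ht => ?_)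
    (card_le_two.trans (hM (j + 1) (by omega) le_rfl))⟩
  by_cases htτ : t = τ
  · simp [htτ]
  · simp [eq_of_not_pathColorable hM' hij (hblocked t ht htτ) (hblocked u hu huτ)]


theorem pathColorable_swap (hM : ∀ x, i ≤ x → x ≤ j → 2 ≤ #(M x)) (hij : i ≤ j) (hσ : σ ≠ σ')
    (hτ : ¬PathColorable M i j σ τ) (hτ' : ¬PathColorable M i j σ' τ') :
    τ = σ ∧ τ' = σ' ∨ τ = σ' ∧ τ' = σ := by
  induction j, hij using Nat.le_induction generalizing τ τ' with
  | base =>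
    have h := (eq_pair_of_not_pathColorable_self (hM i le_rfl le_rfl) hτ).symm.trans
      (eq_pair_of_not_pathColorable_self (hM i le_rfl le_rfl) hτ')
    have := eq_of_pair_eq_pair h hσ
    exact .inr ⟨this.2.symm, this.1.symm⟩
  | succ j hij ih =>
    have hM' : ∀ x, i ≤ x → x ≤ j → 2 ≤ #(M x) := fun x hix hxj => hM x hix (by omega)
    obtain ⟨u, hu, hMu⟩ := exists_eq_pair_of_not_pathColorable_succ hM hij hτ
    obtain ⟨u', hu', hMu'⟩ := exists_eq_pair_of_not_pathColorable_succ hM hij hτ'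
    have huu' : u ≠ u' := by
      rcases ih hM' hu hu' with ⟨rfl, rfl⟩ | ⟨rfl, rfl⟩
      exacts [hσ, hσ.symm]
    obtain ⟨rfl, rfl⟩ := eq_of_pair_eq_pair (hMu.symm.trans hMu') huu'
    have := ih hM' hu hu'
    tauto

theorem rigidObstructions_pathColorable (hM : ∀ x, i ≤ x → x ≤ j → 2 ≤ #(M x)) (hij : i ≤ j) :
    RigidObstructions (PathColorable M i j) :=
  ⟨eq_of_not_pathColorable hM hij, pathColorable_swap hM hij⟩

end PathColoring

section HubExtension

variable {P Q : α → α → Prop} {D E : Finset α} {b b' c τ υ : α}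

/-- `b, c, d, e` are the colours of `g₁, f₁, gₙ, fₘ`, and `P`, `Q` say which end colours the
paths `g₂ ⋯ gₙ₋₁` and `f₂ ⋯ fₘ₋₁` can accommodate. -/
def HubExtension (P Q : α → α → Prop) (D E : Finset α) (b c : α) : Prop :=
  ∃ d ∈ D, ∃ e ∈ E, d ≠ b ∧ d ≠ c ∧ e ≠ b ∧ e ≠ c ∧ d ≠ e ∧ P b d ∧ Q c e

theorem HubExtension.symm (h : HubExtension P Q D E b c) : HubExtension Q P E D c b := by
  obtain ⟨d, hd, e, he, hdb, hdc, heb, hec, hde, hPd, hQe⟩ := h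
  exact ⟨e, he, d, hd, hec, heb, hdc, hdb, hde.symm, hQe, hPd⟩

variable [DecidableEq α]

theorem exists_obstruction_of_not_hubExtension (hP : RigidObstructions P) (hQ : RigidObstructions Q)
    (hD : 4 ≤ #D) (hE : 4 ≤ #E) (H : ¬HubExtension P Q D E b c) :
    ∃ υ, υ ≠ b ∧ υ ≠ c ∧ ¬Q c υ ∧ b ∈ E := by
  obtain ⟨d₁, hd₁, hd₁bc⟩ := exists_mem_notMem_of_card_lt_card (s := {b, c}) (t := D)
    (card_le_two.trans_lt (by omega))
  obtain ⟨d₂, hd₂, hd₂bc⟩ := exists_mem_notMem_of_card_lt_card (s := {b, c, d₁}) (t := D)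
    (card_le_three.trans_lt (by omega))
  simp only [mem_insert, mem_singleton, not_or] at hd₁bc hd₂bc
  obtain ⟨d, hd, hdb, hdc, hPd⟩ : ∃ d ∈ D, d ≠ b ∧ d ≠ c ∧ P b d := by
    by_contra! h
    exact hd₂bc.2.2 (hP.unique (h d₂ hd₂ hd₂bc.1 hd₂bc.2.1) (h d₁ hd₁ hd₁bc.1 hd₁bc.2))
  have hQ' : ∀ e ∈ E, e ≠ b → e ≠ c → e ≠ d → ¬Q c e := fun e he heb hec hed hQe =>
    H ⟨d, hd, e, he, hdb, hdc, heb, hec, hed.symm, hPd, hQe⟩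
  have hbE : b ∈ E := by
    by_contra hbE
    obtain ⟨e₁, he₁, he₁cd⟩ := exists_mem_notMem_of_card_lt_card (s := {c, d}) (t := E)
      (card_le_two.trans_lt (by omega))
    obtain ⟨e₂, he₂, he₂cd⟩ := exists_mem_notMem_of_card_lt_card (s := {c, d, e₁}) (t := E)
      (card_le_three.trans_lt (by omega))
    simp only [mem_insert, mem_singleton, not_or] at he₁cd he₂cd
    exact he₂cd.2.2 (hQ.unique (hQ' e₂ he₂ (ne_of_mem_of_not_mem he₂ hbE) he₂cd.1 he₂cd.2.1)
      (hQ' e₁ he₁ (ne_of_mem_of_not_mem he₁ hbE) he₁cd.1 he₁cd.2))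
  obtain ⟨υ, hυ, hυbcd⟩ := exists_mem_notMem_of_card_lt_card (s := {b, c, d}) (t := E)
    (card_le_three.trans_lt (by omega))
  simp only [mem_insert, mem_singleton, not_or] at hυbcd
  exact ⟨υ, hυbcd.1, hυbcd.2.1, hQ' υ hυ hυbcd.1 hυbcd.2.1 hυbcd.2.2, hbE⟩

theorem hubExtension_of_ne (hP : RigidObstructions P) (hQ : RigidObstructions Q) (hD : 4 ≤ #D)
    (hτ : ¬P b τ) (hτb : τ ≠ b) (hυ : ¬Q c υ) (hυb : υ ≠ b) (hbE : b ∈ E) (hb' : b' ≠ b)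
    (hbc : b ≠ c) : HubExtension P Q D E b' c := by
  obtain ⟨d, hd, hdbcb'⟩ := exists_mem_notMem_of_card_lt_card (s := {b, c, b'}) (t := D)
    (card_le_three.trans_lt (by omega))
  simp only [mem_insert, mem_singleton, not_or] at hdbcb'
  refine ⟨d, hd, b, hbE, hdbcb'.2.2, hdbcb'.2.1, hb'.symm, hbc, hdbcb'.1,
    by_contra fun hPd => ?_, by_contra fun hQb => hυb (hQ.unique hυ hQb)⟩
  rcases hP.swap hb'.symm hτ hPd with ⟨h, -⟩ | ⟨-, h⟩
  exacts [hτb h, hdbcb'.1 h]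

theorem hubExtension_swap (hP : RigidObstructions P) (hQ : RigidObstructions Q) (hD : 3 ≤ #D)
    (hE : 4 ≤ #E) (hbc : b ≠ c) (hτ : ¬P b τ) (hτb : τ ≠ b) (hτc : τ ≠ c) (hυ : ¬Q c υ)
    (hυb : υ ≠ b) (hυc : υ ≠ c) : HubExtension P Q D E c b := by
  obtain ⟨d, hd, hdbc⟩ := exists_mem_notMem_of_card_lt_card (s := {b, c}) (t := D)
    (card_le_two.trans_lt (by omega))
  obtain ⟨e, he, hebcd⟩ := exists_mem_notMem_of_card_lt_card (s := {b, c, d}) (t := E)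
    (card_le_three.trans_lt (by omega))
  simp only [mem_insert, mem_singleton, not_or] at hdbc hebcd
  refine ⟨d, hd, e, he, hdbc.2, hdbc.1, hebcd.2.1, hebcd.1, fun h => hebcd.2.2 h.symm,
    by_contra fun hPd => ?_, by_contra fun hQe => ?_⟩
  · rcases hP.swap hbc hτ hPd with ⟨h, -⟩ | ⟨h, -⟩ <;> contradiction
  · rcases hQ.swap hbc.symm hυ hQe with ⟨h, -⟩ | ⟨h, -⟩ <;> contradiction

theorem exists_hubExtension (hP : RigidObstructions P) (hQ : RigidObstructions Q) {B C : Finset α}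
    (hB : 2 ≤ #B) (hC : 2 ≤ #C) (hD : 4 ≤ #D) (hE : 4 ≤ #E) :
    ∃ b ∈ B, ∃ c ∈ C, b ≠ c ∧ HubExtension P Q D E b c := by
  obtain ⟨b, hb⟩ := card_pos.1 (by omega : 0 < #B)
  obtain ⟨c, hc, hcb⟩ := exists_mem_ne hC b
  by_cases H : HubExtension P Q D E b c
  · exact ⟨b, hb, c, hc, hcb.symm, H⟩
  obtain ⟨υ, hυb, hυc, hυ, hbE⟩ := exists_obstruction_of_not_hubExtension hP hQ hD hE H
  obtain ⟨τ, hτc, hτb, hτ, hcD⟩ :=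
    exists_obstruction_of_not_hubExtension hQ hP hE hD (mt HubExtension.symm H)
  obtain ⟨b', hb', hb'b⟩ := exists_mem_ne hB b
  by_cases hb'c : b' = c
  · subst hb'c
    obtain ⟨c', hc', hc'c⟩ := exists_mem_ne hC b'
    by_cases hc'b : c' = b
    · subst hc'b
      exact ⟨b', hb', c', hc', hb'b,
        hubExtension_swap hP hQ (by omega) hE hcb.symm hτ hτb hτc hυ hυb hυc⟩
    · exact ⟨b, hb, c', hc', fun h => hc'b h.symm,
        (hubExtension_of_ne hQ hP hE hυ hυc hτ hτc hcD hc'c hcb).symm⟩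
  · exact ⟨b', hb', c, hc, hb'c, hubExtension_of_ne hP hQ hD hτ hτb hυ hυb hbE hb'b hcb.symm⟩

end HubExtension

end Obstructions

def hubPathColoring (h p : ℕ → ℕ) : Sym2 ℕ → ℕ :=
  Sym2.lift ⟨fun x y => if x = 0 then h y else if y = 0 then h x else p (min x y), fun x y => by
    dsimp only
    split_ifs <;> simp_all [min_comm]⟩

@[simp] theorem hubPathColoring_zero_left (h p : ℕ → ℕ) (y : ℕ) :
    hubPathColoring h p s(0, y) = h y := by
  simp [hubPathColoring]

@[simp] theorem hubPathColoring_succ (h p : ℕ → ℕ) {x : ℕ} (hx : x ≠ 0) :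
    hubPathColoring h p s(x, x + 1) = p x := by
  simp [hubPathColoring, hx]

theorem isListEdgeColoring_hubPathColoring {G : SimpleGraph ℕ} {L : Sym2 ℕ → Finset ℕ}
    {H P : Set ℕ} {h p : ℕ → ℕ}
    (hG : ∀ e ∈ G.edgeSet, (∃ y ∈ H, e = s(0, y)) ∨ ∃ x ∈ P, e = s(x, x + 1)) (hP : 0 ∉ P)
    (hhL : ∀ y ∈ H, h y ∈ L s(0, y)) (hpL : ∀ x ∈ P, p x ∈ L s(x, x + 1)) (hh : Set.InjOn h H)
    (hp : ∀ x ∈ P, x + 1 ∈ P → p x ≠ p (x + 1))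
    (hhp : ∀ y ∈ H, ∀ x ∈ P, y = x ∨ y = x + 1 → h y ≠ p x) :
    IsListEdgeColoring G L (hubPathColoring h p) := by
  have hP' : ∀ x ∈ P, x ≠ 0 := fun x hx h0 => hP (h0 ▸ hx)
  refine ⟨fun e he => ?_, ?_⟩
  · rcases hG e he with ⟨y, hy, rfl⟩ | ⟨x, hx, rfl⟩
    · simpa using hhL y hy
    · simpa [hP' x hx] using hpL x hx
  · rintro e f ⟨he, hf, hef, w, hwe, hwf⟩
    rcases hG e he with ⟨y, hy, rfl⟩ | ⟨x, hx, rfl⟩ <;>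
      rcases hG f hf with ⟨y', hy', rfl⟩ | ⟨x', hx', rfl⟩ <;>
      simp only [Sym2.mem_iff] at hwe hwf
    · simpa using hh.ne hy hy' (by rintro rfl; exact hef rfl)
    · rw [hubPathColoring_zero_left, hubPathColoring_succ _ _ (hP' x' hx')]
      exact hhp y hy x' hx' (by have := hP' x' hx'; omega)
    · rw [hubPathColoring_zero_left, hubPathColoring_succ _ _ (hP' x hx)]
      exact (hhp y' hy' x hx (by have := hP' x hx; omega)).symm
    · rw [hubPathColoring_succ _ _ (hP' x hx), hubPathColoring_succ _ _ (hP' x' hx')]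
      obtain rfl | rfl : x' = x + 1 ∨ x = x' + 1 := by
        have : x ≠ x' := by rintro rfl; exact hef rfl
        omega
      exacts [hp x hx hx', (hp x' hx' hx).symm]

def figureEightHubs (n m : ℕ) : Set ℕ := {1, n - 1, n, n + m - 2}

def figureEightPath (n m : ℕ) : Set ℕ := Set.Icc 1 (n - 2) ∪ Set.Icc n (n + m - 3)

theorem bv_zero (n : ℕ) : bv n 0 = 0 := rfl

theorem bv_of_ne_zero {n j : ℕ} (hj : j ≠ 0) : bv n j = n + j - 1 := if_neg hj

theorem add_one_mod_eq_ite {i n : ℕ} (hi : i < n) :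
    (i + 1) % n = if i + 1 = n then 0 else i + 1 := by
  split_ifs with h
  · simp [h]
  · exact Nat.mod_eq_of_lt (by omega)

theorem mem_edgeSet_figureEight {n m : ℕ} (hn : 3 ≤ n) (hm : 3 ≤ m) {G : SimpleGraph ℕ}
    (hG : G = SimpleGraph.fromEdgeSet
      ({e | ∃ i < n, e = s(i, (i + 1) % n)} ∪
       {e | ∃ j < m, e = s(bv n j, bv n ((j + 1) % m))})) {e : Sym2 ℕ} :
    e ∈ G.edgeSet ↔
      (∃ y ∈ figureEightHubs n m, e = s(0, y)) ∨ ∃ x ∈ figureEightPath n m, e = s(x, x + 1) := by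
  subst hG
  simp only [edgeSet_fromEdgeSet, Set.mem_sdiff, Set.mem_union, Set.mem_ofPred_eq, figureEightHubs,
    figureEightPath, Set.mem_insert_iff, Set.mem_singleton_iff, Set.mem_Icc]
  constructor
  · rintro ⟨⟨i, hi, rfl⟩ | ⟨j, hj, rfl⟩, -⟩
    · rw [add_one_mod_eq_ite hi]
      split_ifs with h
      · exact .inl ⟨n - 1, by omega, by rw [Sym2.eq_swap, show i = n - 1 by omega]⟩
      · rcases Nat.eq_zero_or_pos i with rfl | hi0
        · exact .inl ⟨1, by omega, rfl⟩
        · exact .inr ⟨i, by omega, rfl⟩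
    · rw [add_one_mod_eq_ite hj]
      by_cases hjm : j + 1 = m
      · refine .inl ⟨n + m - 2, by omega, ?_⟩
        rw [if_pos hjm, bv_zero, bv_of_ne_zero (by omega), Sym2.eq_iff]
        omega
      · rw [if_neg hjm]
        rcases Nat.eq_zero_or_pos j with rfl | hj0
        · refine .inl ⟨n, by omega, ?_⟩
          rw [bv_zero, zero_add, bv_of_ne_zero one_ne_zero, Nat.add_sub_cancel]
        · refine .inr ⟨n + j - 1, by omega, ?_⟩
          rw [bv_of_ne_zero (by omega), bv_of_ne_zero (by omega), Sym2.eq_iff]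
          omega
  · rintro (⟨y, hy, rfl⟩ | ⟨x, hx, rfl⟩)
    · refine ⟨?_, by simp only [Sym2.mem_diagSet, Sym2.mk_isDiag_iff]; omega⟩
      rcases hy with rfl | rfl | rfl | rfl
      · exact .inl ⟨0, by omega, by rw [add_one_mod_eq_ite (by omega), if_neg (by omega)]⟩
      · refine .inl ⟨n - 1, by omega, ?_⟩
        rw [add_one_mod_eq_ite (by omega), if_pos (by omega), Sym2.eq_swap]
      · refine .inr ⟨0, by omega, ?_⟩
        rw [add_one_mod_eq_ite (by omega), if_neg (by omega), bv_zero, zero_add,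
          bv_of_ne_zero one_ne_zero, Nat.add_sub_cancel]
      · refine .inr ⟨m - 1, by omega, ?_⟩
        rw [add_one_mod_eq_ite (by omega), if_pos (by omega), bv_zero, bv_of_ne_zero (by omega),
          Sym2.eq_iff]
        omega
    · refine ⟨?_, by simp⟩
      rcases hx with hx | hx
      · refine .inl ⟨x, by omega, ?_⟩
        rw [add_one_mod_eq_ite (by omega), if_neg (by omega)]
      · refine .inr ⟨x - n + 1, by omega, ?_⟩
        rw [add_one_mod_eq_ite (by omega), if_neg (by omega), bv_of_ne_zero (by omega),
          bv_of_ne_zero (by omega), Sym2.eq_iff]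
        omega

theorem exists_isListEdgeColoring_figureEight {n m : ℕ} (hn : 3 ≤ n) (hm : 3 ≤ m)
    {G : SimpleGraph ℕ}
    (hG : G = SimpleGraph.fromEdgeSet
      ({e | ∃ i < n, e = s(i, (i + 1) % n)} ∪
       {e | ∃ j < m, e = s(bv n j, bv n ((j + 1) % m))}))
    {L : Sym2 ℕ → Finset ℕ} {b c : ℕ} (hb : b ∈ L s(0, 1)) (hc : c ∈ L s(0, n)) (hbc : b ≠ c)
    (H : HubExtension (PathColorable (fun x => L s(x, x + 1)) 1 (n - 2))
      (PathColorable (fun x => L s(x, x + 1)) n (n + m - 3))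
      (L s(n - 1, 0)) (L s(n + m - 2, 0)) b c) :
    ∃ C, IsListEdgeColoring G L C := by
  obtain ⟨d, hd, e, he, hdb, hdc, heb, hec, hde, ⟨p₁, hp₁L, hp₁, hp₁b, hp₁d⟩,
    ⟨p₂, hp₂L, hp₂, hp₂c, hp₂e⟩⟩ := H
  let h : ℕ → ℕ := fun y => if y = 1 then b else if y = n - 1 then d else if y = n then c else e
  let p : ℕ → ℕ := fun x => if x < n then p₁ x else p₂ x
  refine ⟨hubPathColoring h p, isListEdgeColoring_hubPathColoring
    (H := figureEightHubs n m) (P := figureEightPath n m)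
    (fun e he => (mem_edgeSet_figureEight hn hm hG).1 he) ?_ ?_ ?_ ?_ ?_ ?_⟩
  · simp only [figureEightPath, Set.mem_union, Set.mem_Icc]
    omega
  · rintro y (rfl | rfl | hy | rfl)
    · simpa [h] using hb
    · simpa [h, show n - 1 ≠ 1 by omega, Sym2.eq_swap] using hd
    · subst y
      simpa [h, show n ≠ 1 by omega, show n ≠ n - 1 by omega] using hc
    · simpa [h, show n + m - 2 ≠ 1 by omega, show n + m - 2 ≠ n - 1 by omega,
        show n + m - 2 ≠ n by omega, Sym2.eq_swap] using he
  · rintro x (⟨hx1, hx2⟩ | ⟨hx1, hx2⟩)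
    · simpa [p, show x < n by omega] using hp₁L x hx1 hx2
    · simpa [p, show ¬x < n by omega] using hp₂L x hx1 hx2
  · rintro y hy y' hy' hyy'
    simp only [figureEightHubs, Set.mem_insert_iff, Set.mem_singleton_iff] at hy hy'
    simp only [h] at hyy'
    split_ifs at hyy' <;> omega
  · rintro x (⟨hx1, hx2⟩ | ⟨hx1, hx2⟩) (⟨hx1', hx2'⟩ | ⟨hx1', hx2'⟩)
    · simpa [p, show x < n by omega, show x + 1 < n by omega] using hp₁ x hx1 (by omega)
    · omega
    · omega
    · simpa [p, show ¬x < n by omega, show ¬x + 1 < n by omega] using hp₂ x hx1 (by omega)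
  · rintro y hy x (⟨hx1, hx2⟩ | ⟨hx1, hx2⟩) hyx <;>
      simp only [figureEightHubs, Set.mem_insert_iff, Set.mem_singleton_iff] at hy
    · obtain ⟨rfl, rfl⟩ | ⟨rfl, rfl⟩ : y = 1 ∧ x = 1 ∨ y = n - 1 ∧ x = n - 2 := by omega
      · simpa [h, p, show 1 < n by omega] using hp₁b.symm
      · simpa [h, p, show n - 1 ≠ 1 by omega, show n - 2 < n by omega] using hp₁d.symm
    · obtain ⟨hy, hx⟩ | ⟨rfl, rfl⟩ : y = n ∧ x = n ∨ y = n + m - 2 ∧ x = n + m - 3 := by omega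
      · subst y x
        simpa [h, p, show n ≠ 1 by omega, show n ≠ n - 1 by omega] using hp₂c.symm
      · simpa [h, p, show n + m - 2 ≠ 1 by omega, show n + m - 2 ≠ n - 1 by omega,
          show n + m - 2 ≠ n by omega, show ¬n + m - 3 < n by omega] using hp₂e.symm

/-- two cycles (lengths `n` and `m`) sharing exactly the vertex `0`,
with edges `gᵢ` (first cycle) and `fⱼ` (second cycle) in cyclic order, where
`gₙ = s(n-1,0)` and `fₘ = s(n+m-2,0)` are incident to the shared vertex.  If all
lists have size at least 2 and `|L(gₙ)| ≥ 4`, `|L(fₘ)| ≥ 4`, then the graph has a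
proper list edge-colouring. -/
theorem stmt4 (n m : ℕ) (hn : 3 ≤ n) (hm : 3 ≤ m)
    (G : SimpleGraph ℕ)
    (hG : G = SimpleGraph.fromEdgeSet
      ({e | ∃ i < n, e = s(i, (i + 1) % n)} ∪
       {e | ∃ j < m, e = s(bv n j, bv n ((j + 1) % m))}))
    (L : Sym2 ℕ → Finset ℕ)
    (hL : ∀ e ∈ G.edgeSet, 2 ≤ (L e).card)
    (hgn : 4 ≤ (L s(n - 1, 0)).card)
    (hfm : 4 ≤ (L s(n + m - 2, 0)).card) :
    ∃ C, IsListEdgeColoring G L C := by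
  have hpath : ∀ x ∈ figureEightPath n m, 2 ≤ #(L s(x, x + 1)) :=
    fun x hx => hL _ ((mem_edgeSet_figureEight hn hm hG).2 (.inr ⟨x, hx, rfl⟩))
  have hhub : ∀ y ∈ figureEightHubs n m, 2 ≤ #(L s(0, y)) :=
    fun y hy => hL _ ((mem_edgeSet_figureEight hn hm hG).2 (.inl ⟨y, hy, rfl⟩))
  obtain ⟨b, hb, c, hc, hbc, H⟩ := exists_hubExtension
    (rigidObstructions_pathColorable (fun x h₁ h₂ => hpath x (.inl ⟨h₁, h₂⟩)) (by omega))
    (rigidObstructions_pathColorable (fun x h₁ h₂ => hpath x (.inr ⟨h₁, h₂⟩)) (by omega))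
    (hhub 1 (by simp [figureEightHubs])) (hhub n (by simp [figureEightHubs])) hgn hfm
  exact exists_isListEdgeColoring_figureEight hn hm hG hb hc hbc H
end

section
/- Let G be a bipartite graph with biparts V and W where every edge wv (w ∈ W, v ∈ V) is assigned the list L(wv) = {1, …, deg(v)}. Then G is V-choosable if and only if G has a proper L-edge-colouring. -/
open SimpleGraph Sum

/-- A graph on `A ⊕ B` is bipartite with parts `A` and `B` if all edges go
between the two parts. -/
def IsBipartiteSum {A B : Type*} (G : SimpleGraph (A ⊕ B)) : Prop :=
  (∀ a a' : A, ¬G.Adj (Sum.inl a) (Sum.inl a')) ∧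
  (∀ b b' : B, ¬G.Adj (Sum.inr b) (Sum.inr b'))

/-- A bipartite graph (parts `A`, `B`) is `A`-choosable if every list assignment
with `|L(ab)| ≥ deg(a)` for all edges `ab` (`a ∈ A`) admits a proper list
edge-colouring. -/
def AChoosable {A B : Type*} (G : SimpleGraph (A ⊕ B)) : Prop :=
  ∀ L : Sym2 (A ⊕ B) → Finset ℕ,
    (∀ (a : A) (b : B), G.Adj (Sum.inl a) (Sum.inr b) →
      (G.neighborSet (Sum.inl a)).ncard ≤ (L s(Sum.inl a, Sum.inr b)).card) →
    ∃ C, IsListEdgeColoring G L C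

/-- The induced subgraph `G[W' ∪ N(W')]`, realised as the subgraph of `G`
consisting of all edges whose `B`-endpoint lies in `W'`. -/
def restrictB {A B : Type*} (G : SimpleGraph (A ⊕ B)) (W' : Set B) :
    SimpleGraph (A ⊕ B) where
  Adj x y := G.Adj x y ∧ (∀ b, x = Sum.inr b → b ∈ W') ∧ (∀ b, y = Sum.inr b → b ∈ W')
  symm := by
    constructor
    intro x y h
    exact ⟨h.1.symm, h.2.2, h.2.1⟩
  loopless := by
    constructor
    intro x h
    exact G.irrefl h.1

/-!
The direction `→` is immediate, since `L` itself satisfies `|L(ab)| = deg(a)`. Conversely, a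
proper `L`-colouring `r` orients the line graph as in Galvin's proof of the Dinitz conjecture: an
edge points to the edges that share its `A`-vertex and have larger colour, and to those that share
its `B`-vertex and have smaller colour. As the colours at `a` are distinct and lie in
`{1, …, deg a}`, every out-degree is below `deg a`. Every subset of edges has a kernel (a stable
matching, produced by the Gale–Shapley procedure with `A` proposing along decreasing colour), so
the kernel lemma of Bondy–Boppana–Siegel colours the edges from any lists longer than the
out-degrees.
-/

namespace Galvin

open Finset

variable {A B α γ : Type*}

def IsProperOn (r : A × B → γ) (E : Finset (A × B)) : Prop :=
  ∀ e ∈ E, ∀ f ∈ E, e ≠ f → (e.1 = f.1 ∨ e.2 = f.2) → r e ≠ r f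

theorem IsProperOn.mono {r : A × B → γ} {E E' : Finset (A × B)} (hr : IsProperOn r E)
    (hE' : E' ⊆ E) : IsProperOn r E' :=
  fun e he f hf => hr e (hE' he) f (hE' hf)

theorem IsProperOn.eq_of_apply_eq {r : A × B → γ} {E : Finset (A × B)} (hr : IsProperOn r E)
    {e f : A × B} (he : e ∈ E) (hf : f ∈ E) (hshare : e.1 = f.1 ∨ e.2 = f.2)
    (hef : r e = r f) : e = f := by
  by_contra hne
  exact hr e he f hf hne hshare hef

def IsMatching (K : Finset (A × B)) : Prop :=
  ∀ k ∈ K, ∀ k' ∈ K, k ≠ k' → k.1 ≠ k'.1 ∧ k.2 ≠ k'.2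

/-- The arc `e → f` of Galvin's orientation: `A`-vertices prefer larger `r`, `B`-vertices
smaller `r`. -/
def Dominates [LinearOrder α] (r : A × B → α) (f e : A × B) : Prop :=
  (f.1 = e.1 ∧ r e < r f) ∨ (f.2 = e.2 ∧ r f < r e)

instance [DecidableEq A] [DecidableEq B] [LinearOrder α] (r : A × B → α) (e : A × B) :
    DecidablePred (Dominates r · e) :=
  fun _ => inferInstanceAs (Decidable (_ ∨ _))

def dominators [DecidableEq A] [DecidableEq B] [LinearOrder α] (r : A × B → α)
    (E : Finset (A × B)) (e : A × B) : Finset (A × B) :=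
  E.filter (Dominates r · e)

def IsKernel [LinearOrder α] (r : A × B → α) (E K : Finset (A × B)) : Prop :=
  K ⊆ E ∧ IsMatching K ∧ ∀ e ∈ E, e ∉ K → ∃ k ∈ K, Dominates r k e

section StableMatching

variable [DecidableEq A] [LinearOrder α] {r : A × B → α} {E E' : Finset (A × B)}

/-- The current proposals of the Gale–Shapley procedure run on the remaining edges `E'`. -/
def topEdges (r : A × B → α) (E' : Finset (A × B)) : Finset (A × B) :=
  E'.filter fun f => ∀ g ∈ E', g.1 = f.1 → r g ≤ r f

/-- The Gale–Shapley invariant: every discarded edge was rejected by its `B`-vertex in favour of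
a current proposal. -/
def Rejected (r : A × B → α) (E E' : Finset (A × B)) : Prop :=
  ∀ e ∈ E, e ∉ E' → ∃ f ∈ topEdges r E', f.2 = e.2 ∧ r f < r e

theorem exists_mem_topEdges {e : A × B} (he : e ∈ E') :
    ∃ k ∈ topEdges r E', k.1 = e.1 ∧ r e ≤ r k := by
  obtain ⟨k, hk, hmax⟩ := (E'.filter (·.1 = e.1)).exists_max_image r ⟨e, by simp [he]⟩
  rw [mem_filter] at hk
  refine ⟨k, mem_filter.2 ⟨hk.1, fun g hg hgk => ?_⟩, hk.2, hmax e (by simp [he])⟩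
  exact hmax g (mem_filter.2 ⟨hg, hgk.trans hk.2⟩)

theorem mem_topEdges_erase [DecidableEq B] {g f : A × B} (hg : g ∈ topEdges r E')
    (hgf : g ≠ f) : g ∈ topEdges r (E'.erase f) := by
  simp only [topEdges, mem_filter, mem_erase] at hg ⊢
  exact ⟨⟨hgf, hg.1⟩, fun h hh => hg.2 h hh.2⟩

theorem Rejected.erase [DecidableEq B] (hrej : Rejected r E E') {e f : A × B}
    (he : e ∈ topEdges r E') (hf : f ∈ topEdges r E') (hef : e.2 = f.2) (hlt : r e < r f) :
    Rejected r E (E'.erase f) := by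
  have he' : e ∈ topEdges r (E'.erase f) := mem_topEdges_erase he (ne_of_apply_ne r hlt.ne)
  intro g hg hgE'
  by_cases hgf : g = f
  · exact ⟨e, he', hgf ▸ hef, hgf ▸ hlt⟩
  obtain ⟨f₀, hf₀, hf₀g, hlt₀⟩ := hrej g hg fun h => hgE' (mem_erase.2 ⟨hgf, h⟩)
  by_cases hf₀f : f₀ = f
  · subst hf₀f
    exact ⟨e, he', hef.trans hf₀g, hlt.trans hlt₀⟩
  · exact ⟨f₀, mem_topEdges_erase hf₀ hf₀f, hf₀g, hlt₀⟩

theorem isKernel_topEdges (hr : IsProperOn r E) (hE' : E' ⊆ E) (hrej : Rejected r E E')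
    (hsnd : ∀ e ∈ topEdges r E', ∀ f ∈ topEdges r E', e ≠ f → e.2 ≠ f.2) :
    IsKernel r E (topEdges r E') := by
  have htop : topEdges r E' ⊆ E := (filter_subset _ _).trans hE'
  refine ⟨htop, fun k hk k' hk' hne => ⟨fun h1 => hne ?_, hsnd k hk k' hk' hne⟩, ?_⟩
  · refine hr.eq_of_apply_eq (htop hk) (htop hk') (Or.inl h1) (le_antisymm ?_ ?_)
    · exact (mem_filter.1 hk').2 k (mem_filter.1 hk).1 h1
    · exact (mem_filter.1 hk).2 k' (mem_filter.1 hk').1 h1.symm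
  intro e he heK
  by_cases heE' : e ∈ E'
  · obtain ⟨k, hk, hke, hle⟩ := exists_mem_topEdges (r := r) heE'
    have hne : e ≠ k := fun h => heK (h ▸ hk)
    exact ⟨k, hk, Or.inl ⟨hke, hle.lt_of_ne (hr e he k (htop hk) hne (Or.inl hke.symm))⟩⟩
  · obtain ⟨f, hf, hfe, hlt⟩ := hrej e he heE'
    exact ⟨f, hf, Or.inr ⟨hfe, hlt⟩⟩

theorem exists_isKernel_of_rejected [DecidableEq B] (hr : IsProperOn r E) (E' : Finset (A × B))
    (hE' : E' ⊆ E) (hrej : Rejected r E E') : ∃ K, IsKernel r E K := by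
  induction E' using Finset.strongInduction with
  | H E' ih =>
  by_cases hclash : ∃ e ∈ topEdges r E', ∃ f ∈ topEdges r E', e ≠ f ∧ e.2 = f.2
  · obtain ⟨e, he, f, hf, hef, h2⟩ := hclash
    have htop : topEdges r E' ⊆ E := (filter_subset _ _).trans hE'
    -- the `B`-vertex keeps the proposal of smaller rank and rejects the other one
    obtain ⟨e, he, f, hf, h2, hlt⟩ :
        ∃ e ∈ topEdges r E', ∃ f ∈ topEdges r E', e.2 = f.2 ∧ r e < r f := by
      rcases (hr e (htop he) f (htop hf) hef (Or.inr h2)).lt_or_gt with h | h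
      exacts [⟨e, he, f, hf, h2, h⟩, ⟨f, hf, e, he, h2.symm, h⟩]
    exact ih _ (erase_ssubset (mem_filter.1 hf).1) ((erase_subset _ _).trans hE')
      (hrej.erase he hf h2 hlt)
  · push Not at hclash
    exact ⟨_, isKernel_topEdges hr hE' hrej hclash⟩

theorem exists_isKernel [DecidableEq B] (hr : IsProperOn r E) : ∃ K, IsKernel r E K :=
  exists_isKernel_of_rejected hr E subset_rfl fun _ he he' => absurd he he'

end StableMatching

section KernelLemma

variable [DecidableEq A] [DecidableEq B] [LinearOrder α] {r : A × B → α}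
  {E K : Finset (A × B)}

theorem card_dominators_sdiff_lt {L : A × B → Finset ℕ} {c : ℕ}
    (hK : IsKernel r (E.filter (c ∈ L ·)) K)
    (hL : ∀ e ∈ E, (dominators r E e).card < (L e).card) {e : A × B} (he : e ∈ E \ K) :
    (dominators r (E \ K) e).card < ((L e).erase c).card := by
  obtain ⟨heE, heK⟩ := mem_sdiff.1 he
  have hsub : dominators r (E \ K) e ⊆ dominators r E e := filter_subset_filter _ sdiff_subset
  have hlt := hL e heE
  by_cases hc : c ∈ L e
  · obtain ⟨k, hk, hke⟩ := hK.2.2 e (mem_filter.2 ⟨heE, hc⟩) heK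
    have hkE : k ∈ dominators r E e := mem_filter.2 ⟨(hK.1.trans (filter_subset _ _)) hk, hke⟩
    have hsub' : dominators r (E \ K) e ⊆ (dominators r E e).erase k := fun f hf =>
      mem_erase.2 ⟨fun h => (mem_sdiff.1 (mem_filter.1 hf).1).2 (h ▸ hk), hsub hf⟩
    have h1 := card_le_card hsub'
    rw [card_erase_of_mem hkE] at h1
    rw [card_erase_of_mem hc]
    have := card_pos.2 ⟨k, hkE⟩
    omega
  · rw [erase_eq_of_notMem hc]
    exact (card_le_card hsub).trans_lt hlt

theorem exists_listColoring (hr : IsProperOn r E) (L : A × B → Finset ℕ)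
    (hL : ∀ e ∈ E, (dominators r E e).card < (L e).card) :
    ∃ c : A × B → ℕ, (∀ e ∈ E, c e ∈ L e) ∧ IsProperOn c E := by
  induction E using Finset.strongInduction generalizing L with
  | H E ih =>
  rcases E.eq_empty_or_nonempty with rfl | ⟨e₀, he₀⟩
  · exact ⟨fun _ => 0, by simp, by simp [IsProperOn]⟩
  obtain ⟨c₀, hc₀⟩ : (L e₀).Nonempty :=
    card_pos.1 ((Nat.zero_le _).trans_lt (hL e₀ he₀))
  -- colour a kernel of the edges whose lists contain `c₀` with `c₀`, and the remaining edges
  -- recursively from their lists without `c₀`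
  obtain ⟨K, hK⟩ := exists_isKernel (hr.mono (filter_subset (c₀ ∈ L ·) E))
  have hKE : K ⊆ E := hK.1.trans (filter_subset _ _)
  have hKne : K.Nonempty := by
    by_cases h : e₀ ∈ K
    · exact ⟨e₀, h⟩
    · obtain ⟨k, hk, -⟩ := hK.2.2 e₀ (mem_filter.2 ⟨he₀, hc₀⟩) h
      exact ⟨k, hk⟩
  obtain ⟨c, hcL, hc⟩ := ih (E \ K) (sdiff_ssubset hKE hKne) (hr.mono sdiff_subset)
    (fun e => (L e).erase c₀) fun e he => card_dominators_sdiff_lt hK hL he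
  have hcK : ∀ e ∈ E, e ∉ K → c e ≠ c₀ := fun e he heK =>
    ne_of_mem_erase (hcL e (mem_sdiff.2 ⟨he, heK⟩))
  refine ⟨fun e => if e ∈ K then c₀ else c e, fun e he => ?_,
    fun e he f hf hef hshare => ?_⟩
  · dsimp only
    split_ifs with heK
    · exact (mem_filter.1 (hK.1 heK)).2
    · exact mem_of_mem_erase (hcL e (mem_sdiff.2 ⟨he, heK⟩))
  · dsimp only
    split_ifs with heK hfK hfK
    · have := hK.2.1 e heK f hfK hef
      tauto
    · exact (hcK f hf hfK).symm
    · exact hcK e he heK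
    · exact hc e (mem_sdiff.2 ⟨he, heK⟩) f (mem_sdiff.2 ⟨hf, hfK⟩) hef hshare

end KernelLemma

theorem card_dominators_lt [DecidableEq A] [DecidableEq B] {r : A × B → ℕ}
    {E : Finset (A × B)} (hr : IsProperOn r E) (d : A → ℕ)
    (hrange : ∀ e ∈ E, r e ∈ Icc 1 (d e.1)) {e : A × B} (he : e ∈ E) :
    (dominators r E e).card < d e.1 := by
  obtain ⟨h1, hd⟩ := mem_Icc.1 (hrange e he)
  have hsplit : dominators r E e ⊆ E.filter (fun f => f.1 = e.1 ∧ r e < r f) ∪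
      E.filter (fun f => f.2 = e.2 ∧ r f < r e) := by
    rw [dominators, ← filter_or]
    rfl
  have hfst : (E.filter (fun f => f.1 = e.1 ∧ r e < r f)).card ≤ (Ioc (r e) (d e.1)).card := by
    refine card_le_card_of_injOn r (fun f hf => ?_) fun f hf g hg hfg => ?_
    · obtain ⟨hfE, hfe, hlt⟩ := mem_filter.1 hf
      exact mem_Ioc.2 ⟨hlt, hfe ▸ (mem_Icc.1 (hrange f hfE)).2⟩
    · obtain ⟨hfE, hfe, -⟩ := mem_filter.1 hf
      obtain ⟨hgE, hge, -⟩ := mem_filter.1 hg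
      exact hr.eq_of_apply_eq hfE hgE (Or.inl (hfe.trans hge.symm)) hfg
  have hsnd : (E.filter (fun f => f.2 = e.2 ∧ r f < r e)).card ≤ (Ico 1 (r e)).card := by
    refine card_le_card_of_injOn r (fun f hf => ?_) fun f hf g hg hfg => ?_
    · obtain ⟨hfE, -, hlt⟩ := mem_filter.1 hf
      exact mem_Ico.2 ⟨(mem_Icc.1 (hrange f hfE)).1, hlt⟩
    · obtain ⟨hfE, hfe, -⟩ := mem_filter.1 hf
      obtain ⟨hgE, hge, -⟩ := mem_filter.1 hg
      exact hr.eq_of_apply_eq hfE hgE (Or.inr (hfe.trans hge.symm)) hfg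
  have := (card_le_card hsplit).trans (card_union_le _ _)
  rw [Nat.card_Ioc] at hfst
  rw [Nat.card_Ico] at hsnd
  omega

end Galvin

section Bipartite

open Galvin

variable {A B : Type*} {G : SimpleGraph (A ⊕ B)}

theorem IsBipartiteSum.exists_eq_mk (hG : IsBipartiteSum G) {s : Sym2 (A ⊕ B)}
    (hs : s ∈ G.edgeSet) : ∃ a b, s = s(inl a, inr b) ∧ G.Adj (inl a) (inr b) := by
  induction s using Sym2.ind with
  | _ x y =>
  rw [mem_edgeSet] at hs
  rcases x with a | b <;> rcases y with a' | b'
  · exact absurd hs (hG.1 a a')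
  · exact ⟨a, b', rfl, hs⟩
  · exact ⟨a', b, Sym2.eq_swap, hs.symm⟩
  · exact absurd hs (hG.2 b b')

theorem edgeAdj_mk_iff {a a' : A} {b b' : B} :
    EdgeAdj G s(inl a, inr b) s(inl a', inr b') ↔ G.Adj (inl a) (inr b) ∧
      G.Adj (inl a') (inr b') ∧ (a, b) ≠ (a', b') ∧ (a = a' ∨ b = b') := by
  simp [EdgeAdj]

def liftColoring (c : A × B → ℕ) : Sym2 (A ⊕ B) → ℕ :=
  Sym2.lift ⟨fun x y => match x, y with
    | inl a, inr b | inr b, inl a => c (a, b)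
    | _, _ => 0, by rintro (a | b) (a' | b') <;> rfl⟩

theorem IsListEdgeColoring.isProperOn {L : Sym2 (A ⊕ B) → Finset ℕ}
    {C : Sym2 (A ⊕ B) → ℕ} (hC : IsListEdgeColoring G L C) {E : Finset (A × B)}
    (hE : ∀ p ∈ E, G.Adj (inl p.1) (inr p.2)) :
    IsProperOn (fun p => C s(inl p.1, inr p.2)) E :=
  fun e he f hf hef hshare => hC.2 _ _ (edgeAdj_mk_iff.2 ⟨hE e he, hE f hf, hef, hshare⟩)

theorem isListEdgeColoring_liftColoring (hG : IsBipartiteSum G) {L : Sym2 (A ⊕ B) → Finset ℕ}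
    {E : Finset (A × B)} (hE : ∀ p, p ∈ E ↔ G.Adj (inl p.1) (inr p.2)) {c : A × B → ℕ}
    (hcL : ∀ p ∈ E, c p ∈ L s(inl p.1, inr p.2)) (hc : IsProperOn c E) :
    IsListEdgeColoring G L (liftColoring c) := by
  refine ⟨fun s hs => ?_, fun s t hst => ?_⟩
  · obtain ⟨a, b, rfl, hab⟩ := hG.exists_eq_mk hs
    exact hcL (a, b) ((hE _).2 hab)
  · obtain ⟨a, b, rfl, -⟩ := hG.exists_eq_mk hst.1
    obtain ⟨a', b', rfl, -⟩ := hG.exists_eq_mk hst.2.1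
    obtain ⟨hab, hab', hne, hshare⟩ := edgeAdj_mk_iff.1 hst
    exact hc (a, b) ((hE _).2 hab) (a', b') ((hE _).2 hab') hne hshare

end Bipartite

/-- if every edge `ab` of the bipartite graph `G` carries the list
`{1, …, deg(a)}`, then `G` is `A`-choosable iff it has a proper `L`-edge
colouring for this particular list assignment. -/
theorem stmt6 {A B : Type*} [Fintype A] [Fintype B]
    (G : SimpleGraph (A ⊕ B)) (hbip : IsBipartiteSum G)
    (L : Sym2 (A ⊕ B) → Finset ℕ)
    (hL : ∀ (a : A) (b : B), G.Adj (Sum.inl a) (Sum.inr b) →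
      L s(Sum.inl a, Sum.inr b) = Finset.Icc 1 ((G.neighborSet (Sum.inl a)).ncard)) :
    AChoosable G ↔ ∃ C, IsListEdgeColoring G L C := by
  classical
  refine ⟨fun h => h L fun a b hab => by rw [hL a b hab, Nat.card_Icc]; omega, ?_⟩
  rintro ⟨C₀, hC₀⟩ M hM
  set deg : A → ℕ := fun a => (G.neighborSet (inl a)).ncard
  set E := Finset.univ.filter fun p : A × B => G.Adj (inl p.1) (inr p.2)
  have hE : ∀ p, p ∈ E ↔ G.Adj (inl p.1) (inr p.2) := by simp [E]
  have hr := hC₀.isProperOn fun p => (hE p).1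
  have hrange : ∀ e ∈ E, C₀ s(inl e.1, inr e.2) ∈ Finset.Icc 1 (deg e.1) :=
    fun e he => hL e.1 e.2 ((hE e).1 he) ▸ hC₀.1 _ ((hE e).1 he)
  obtain ⟨c, hcM, hc⟩ := Galvin.exists_listColoring hr (fun p => M s(inl p.1, inr p.2))
    fun e he => (Galvin.card_dominators_lt hr deg hrange he).trans_le (hM e.1 e.2 ((hE e).1 he))
  exact ⟨liftColoring c, isListEdgeColoring_liftColoring hbip hE hcM hc⟩
end

section
/- Let G be a bipartite graph with biparts V and W with |V| ≤ |W| = 3. Then there exists a nonempty subset W' ⊆ W such that the induced bipartite subgraph G[W' ∪ N(W')] is N(W')-choosable. -/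
open SimpleGraph Sum

namespace Stmt7Aux


variable {α β : Type*} [DecidableEq α] [DecidableEq β]

/-- Two edges (as pairs) share an endpoint. -/
def Shares (e f : α × β) : Prop := e.1 = f.1 ∨ e.2 = f.2

/-- `ra`, `rb` are injective rankings on the edges at each vertex. -/
def GoodR (E : Finset (α × β)) (ra : α → α × β → ℕ) (rb : β → α × β → ℕ) : Prop :=
  ∀ e ∈ E, ∀ f ∈ E, e ≠ f →
    (e.1 = f.1 → ra e.1 e ≠ ra e.1 f) ∧ (e.2 = f.2 → rb e.2 e ≠ rb e.2 f)

noncomputable def prefA (E : Finset (α × β)) (ra : α → α × β → ℕ) (e : α × β) : ℕ :=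
  (E.filter fun f => f.1 = e.1 ∧ ra e.1 f < ra e.1 e).card

noncomputable def prefB (E : Finset (α × β)) (rb : β → α × β → ℕ) (e : α × β) : ℕ :=
  (E.filter fun f => f.2 = e.2 ∧ rb e.2 f < rb e.2 e).card

lemma goodR_mono {E E' : Finset (α × β)} {ra rb} (h : E' ⊆ E) (hg : GoodR E ra rb) :
    GoodR E' ra rb := fun e he f hf hne => hg e (h he) f (h hf) hne

/-- Stable matchings exist. -/
lemma exists_stable (E : Finset (α × β)) (ra : α → α × β → ℕ) (rb : β → α × β → ℕ)
    (hg : GoodR E ra rb) :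
    ∃ M ⊆ E, (∀ e ∈ M, ∀ f ∈ M, e ≠ f → ¬ Shares e f) ∧
      (∀ e ∈ E, e ∉ M → ∃ f ∈ M,
        (f.1 = e.1 ∧ ra e.1 f < ra e.1 e) ∨ (f.2 = e.2 ∧ rb e.2 f < rb e.2 e)) := by
  classical
  suffices H : ∀ n (E : Finset (α × β)), E.card ≤ n → GoodR E ra rb →
      ∃ M ⊆ E, (∀ e ∈ M, ∀ f ∈ M, e ≠ f → ¬ Shares e f) ∧
      (∀ e ∈ E, e ∉ M → ∃ f ∈ M,
        (f.1 = e.1 ∧ ra e.1 f < ra e.1 e) ∨ (f.2 = e.2 ∧ rb e.2 f < rb e.2 e)) by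
    exact H E.card E le_rfl hg
  intro n
  induction n with
  | zero =>
    intro E hE _
    refine ⟨∅, Finset.empty_subset _, by simp, ?_⟩
    intro e he _
    have : E = ∅ := Finset.card_eq_zero.mp (Nat.le_zero.mp hE)
    simp [this] at he
  | succ n ih =>
    intro E hE hg
    by_cases hdel : ∃ e' ∈ E, ∃ f ∈ E,
        (∀ g ∈ E, g.1 = e'.1 → ra e'.1 e' ≤ ra e'.1 g) ∧ f ≠ e' ∧ f.2 = e'.2 ∧
          rb e'.2 e' < rb e'.2 f
    · obtain ⟨e', he', f, hf, hmin, hfne, hf2, hflt⟩ := hdel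
      have hcard : (E.erase f).card ≤ n := by
        have := Finset.card_erase_of_mem hf
        omega
      obtain ⟨M, hME, hmatch, hdom⟩ :=
        ih (E.erase f) hcard (goodR_mono (Finset.erase_subset _ _) hg)
      refine ⟨M, hME.trans (Finset.erase_subset _ _), hmatch, ?_⟩
      intro e he heM
      by_cases hef : e = f
      · subst hef
        by_cases he'M : e' ∈ M
        · exact ⟨e', he'M, Or.inr ⟨hf2.symm, by rw [hf2]; exact hflt⟩⟩
        · have he'E : e' ∈ E.erase e := Finset.mem_erase.mpr ⟨fun h => hfne h.symm, he'⟩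
          obtain ⟨g, hgM, hgor⟩ := hdom e' he'E he'M
          rcases hgor with ⟨hg1, hglt⟩ | ⟨hg2, hglt⟩
          · exact absurd hglt (not_lt.mpr (hmin g (Finset.mem_of_mem_erase (hME hgM)) hg1))
          · refine ⟨g, hgM, Or.inr ⟨hg2.trans hf2.symm, ?_⟩⟩
            rw [hf2]
            exact hglt.trans hflt
      · exact hdom e (Finset.mem_erase.mpr ⟨hef, he⟩) heM
    · push_neg at hdel
      set M := E.filter (fun e => ∀ g ∈ E, g.1 = e.1 → ra e.1 e ≤ ra e.1 g) with hM
      have hMmin : ∀ e ∈ M, ∀ g ∈ E, g.1 = e.1 → ra e.1 e ≤ ra e.1 g := by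
        intro e he
        exact (Finset.mem_filter.mp he).2
      have hMmax : ∀ e ∈ M, ∀ f ∈ E, f ≠ e → f.2 = e.2 → rb e.2 f < rb e.2 e := by
        intro e he f hf hfne hf2
        have hE' := (Finset.mem_filter.mp he).1
        have := hdel e hE' f hf (hMmin e he) hfne hf2
        have hne := (hg f hf e hE' hfne).2 hf2
        rw [hf2] at hne
        omega
      refine ⟨M, Finset.filter_subset _ _, ?_, ?_⟩
      · intro e he f hf hne hs
        rcases hs with h1 | h2
        · have h1' := hMmin e he f (Finset.filter_subset _ _ hf) h1.symm
          have h2' := hMmin f hf e (Finset.filter_subset _ _ he) h1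
          rw [← h1] at h2'
          have := (hg e (Finset.filter_subset _ _ he) f (Finset.filter_subset _ _ hf) hne).1 h1
          omega
        · have h1' := hMmax e he f (Finset.filter_subset _ _ hf) (fun h => hne h.symm) h2.symm
          have h2' := hMmax f hf e (Finset.filter_subset _ _ he) hne h2
          rw [← h2] at h2'
          omega
      · intro e he heM
        obtain ⟨m, hm, hmmin⟩ :=
          (E.filter (fun g => g.1 = e.1)).exists_min_image (fun g => ra e.1 g)
            ⟨e, Finset.mem_filter.mpr ⟨he, rfl⟩⟩
        obtain ⟨hmE, hm1⟩ := Finset.mem_filter.mp hm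
        have hmM : m ∈ M := by
          refine Finset.mem_filter.mpr ⟨hmE, ?_⟩
          intro g hgE hg1
          rw [hm1]
          exact hmmin g (Finset.mem_filter.mpr ⟨hgE, by rw [hg1, hm1]⟩)
        have hmne : m ≠ e := fun h => heM (h ▸ hmM)
        have hle := hmmin e (Finset.mem_filter.mpr ⟨he, rfl⟩)
        have hne := (hg m hmE e he hmne).1 hm1
        rw [hm1] at hne
        refine ⟨m, hmM, Or.inl ⟨hm1, ?_⟩⟩
        omega


/-- Galvin's kernel-method colouring lemma. -/
lemma galvin : ∀ (N : ℕ) (E : Finset (α × β)) (L : α × β → Finset ℕ)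
    (ra : α → α × β → ℕ) (rb : β → α × β → ℕ),
    (∑ e ∈ E, (L e).card) ≤ N → GoodR E ra rb →
    (∀ e ∈ E, prefA E ra e + prefB E rb e + 1 ≤ (L e).card) →
    ∃ C : α × β → ℕ, (∀ e ∈ E, C e ∈ L e) ∧
      ∀ e ∈ E, ∀ f ∈ E, e ≠ f → Shares e f → C e ≠ C f := by
  classical
  intro N
  induction N with
  | zero =>
    intro E L ra rb hsum hg hb
    rcases E.eq_empty_or_nonempty with rfl | ⟨e0, he0⟩
    · exact ⟨fun _ => 0, by simp, by simp⟩
    · have h1 := hb e0 he0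
      have h2 : (L e0).card ≤ ∑ e ∈ E, (L e).card :=
        Finset.single_le_sum (f := fun e => (L e).card) (fun e _ => Nat.zero_le _) he0
      omega
  | succ n ih =>
    intro E L ra rb hsum hg hb
    rcases E.eq_empty_or_nonempty with rfl | ⟨e0, he0⟩
    · exact ⟨fun _ => 0, by simp, by simp⟩
    have hc0 : (L e0).Nonempty := by
      rw [← Finset.card_pos]
      have := hb e0 he0
      omega
    obtain ⟨c, hc⟩ := hc0
    set U := E.filter (fun e => c ∈ L e) with hU
    have he0U : e0 ∈ U := Finset.mem_filter.mpr ⟨he0, hc⟩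
    have hUE : U ⊆ E := Finset.filter_subset _ _
    obtain ⟨M, hMU, hmatch, hdom⟩ := exists_stable U ra rb (goodR_mono hUE hg)
    have hMne : M.Nonempty := by
      by_cases h : e0 ∈ M
      · exact ⟨e0, h⟩
      · obtain ⟨f, hf, -⟩ := hdom e0 he0U h
        exact ⟨f, hf⟩
    set E' := E \ M with hE'
    set L' : α × β → Finset ℕ := fun e => if c ∈ L e then (L e).erase c else L e with hL'
    have hL'sub : ∀ e, L' e ⊆ L e := by
      intro e
      simp only [hL']
      split
      · exact Finset.erase_subset _ _
      · exact subset_rfl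
    have hE'E : E' ⊆ E := Finset.sdiff_subset
    -- sum decrease
    obtain ⟨m, hm⟩ := hMne
    have hmE : m ∈ E := hUE (hMU hm)
    have hmc : 1 ≤ (L m).card := Finset.card_pos.mpr ⟨c, (Finset.mem_filter.mp (hMU hm)).2⟩
    have hsum' : (∑ e ∈ E', (L' e).card) ≤ n := by
      have h1 : (∑ e ∈ E', (L' e).card) ≤ ∑ e ∈ E.erase m, (L e).card := by
        apply le_trans (Finset.sum_le_sum (fun e _ => Finset.card_le_card (hL'sub e)))
        apply Finset.sum_le_sum_of_subset
        intro x hx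
        obtain ⟨hxE, hxM⟩ := Finset.mem_sdiff.mp hx
        exact Finset.mem_erase.mpr ⟨fun h => hxM (h ▸ hm), hxE⟩
      have h2 : (∑ e ∈ E.erase m, (L e).card) + (L m).card = ∑ e ∈ E, (L e).card :=
        Finset.sum_erase_add _ _ hmE
      omega
    -- invariant
    have hinv : ∀ e ∈ E', prefA E' ra e + prefB E' rb e + 1 ≤ (L' e).card := by
      intro e he'
      obtain ⟨heE, heM⟩ := Finset.mem_sdiff.mp he'
      have hpa : prefA E' ra e ≤ prefA E ra e :=
        Finset.card_le_card (Finset.filter_subset_filter _ hE'E)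
      have hpb : prefB E' rb e ≤ prefB E rb e :=
        Finset.card_le_card (Finset.filter_subset_filter _ hE'E)
      by_cases hce : c ∈ L e
      · have heU : e ∈ U := Finset.mem_filter.mpr ⟨heE, hce⟩
        obtain ⟨f, hfM, hfor⟩ := hdom e heU heM
        have hfE : f ∈ E := hUE (hMU hfM)
        have hfE' : f ∉ E' := fun h => (Finset.mem_sdiff.mp h).2 hfM
        have hL'e : (L' e).card + 1 = (L e).card := by
          have hpos : 0 < (L e).card := Finset.card_pos.mpr ⟨c, hce⟩
          simp only [hL', if_pos hce]
          rw [Finset.card_erase_of_mem hce]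
          omega
        rcases hfor with ⟨hf1, hflt⟩ | ⟨hf2, hflt⟩
        · have hkey : prefA E' ra e + 1 ≤ prefA E ra e := by
            have hfin : f ∈ E.filter (fun g => g.1 = e.1 ∧ ra e.1 g < ra e.1 e) :=
              Finset.mem_filter.mpr ⟨hfE, hf1, hflt⟩
            have hsub : E'.filter (fun g => g.1 = e.1 ∧ ra e.1 g < ra e.1 e) ⊆
                (E.filter (fun g => g.1 = e.1 ∧ ra e.1 g < ra e.1 e)).erase f := by
              intro g hgmem
              obtain ⟨hgE', hgp⟩ := Finset.mem_filter.mp hgmem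
              exact Finset.mem_erase.mpr ⟨fun h => hfE' (h ▸ hgE'), Finset.mem_filter.mpr ⟨hE'E hgE', hgp⟩⟩
            have := Finset.card_le_card hsub
            rw [Finset.card_erase_of_mem hfin] at this
            have hpos : 0 < (E.filter (fun g => g.1 = e.1 ∧ ra e.1 g < ra e.1 e)).card :=
              Finset.card_pos.mpr ⟨f, hfin⟩
            unfold prefA
            omega
          have hble := hb e heE
          omega
        · have hkey : prefB E' rb e + 1 ≤ prefB E rb e := by
            have hfin : f ∈ E.filter (fun g => g.2 = e.2 ∧ rb e.2 g < rb e.2 e) :=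
              Finset.mem_filter.mpr ⟨hfE, hf2, hflt⟩
            have hsub : E'.filter (fun g => g.2 = e.2 ∧ rb e.2 g < rb e.2 e) ⊆
                (E.filter (fun g => g.2 = e.2 ∧ rb e.2 g < rb e.2 e)).erase f := by
              intro g hgmem
              obtain ⟨hgE', hgp⟩ := Finset.mem_filter.mp hgmem
              exact Finset.mem_erase.mpr ⟨fun h => hfE' (h ▸ hgE'), Finset.mem_filter.mpr ⟨hE'E hgE', hgp⟩⟩
            have := Finset.card_le_card hsub
            rw [Finset.card_erase_of_mem hfin] at this
            have hpos : 0 < (E.filter (fun g => g.2 = e.2 ∧ rb e.2 g < rb e.2 e)).card :=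
              Finset.card_pos.mpr ⟨f, hfin⟩
            unfold prefB
            omega
          have hble := hb e heE
          omega
      · have hL'e : L' e = L e := by simp only [hL', if_neg hce]
        have := hb e heE
        rw [hL'e]
        omega
    obtain ⟨C', hC'mem, hC'prop⟩ := ih E' L' ra rb hsum' (goodR_mono hE'E hg) hinv
    refine ⟨fun e => if e ∈ M then c else C' e, ?_, ?_⟩
    · intro e he
      by_cases heM : e ∈ M
      · simp only [if_pos heM]
        exact (Finset.mem_filter.mp (hMU heM)).2
      · simp only [if_neg heM]
        exact hL'sub e (hC'mem e (Finset.mem_sdiff.mpr ⟨he, heM⟩))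
    · intro e he f hf hne hs
      have hnotc : ∀ g ∈ E, g ∉ M → C' g ≠ c := by
        intro g hg1 hg2
        have hmem := hC'mem g (Finset.mem_sdiff.mpr ⟨hg1, hg2⟩)
        intro hceq
        simp only [hL'] at hmem
        by_cases hcg : c ∈ L g
        · rw [if_pos hcg] at hmem
          rw [hceq] at hmem
          exact Finset.notMem_erase _ _ hmem
        · rw [if_neg hcg] at hmem
          rw [hceq] at hmem
          exact hcg hmem
      by_cases heM : e ∈ M <;> by_cases hfM : f ∈ M
      · exact absurd hs (hmatch e heM f hfM hne)
      · simp only [if_pos heM, if_neg hfM]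
        exact fun h => hnotc f hf hfM h.symm
      · simp only [if_neg heM, if_pos hfM]
        exact hnotc e he heM
      · simp only [if_neg heM, if_neg hfM]
        exact hC'prop e (Finset.mem_sdiff.mpr ⟨he, heM⟩) f (Finset.mem_sdiff.mpr ⟨hf, hfM⟩) hne hs


/-- Bridge: a good ranking bounded by `A`-side degrees gives `A`-choosability. -/
lemma bridge {A B : Type*} [Fintype A] [Fintype B] [DecidableEq A] [DecidableEq B]
    (H : SimpleGraph (A ⊕ B))
    (hb1 : ∀ a a' : A, ¬H.Adj (inl a) (inl a'))
    (hb2 : ∀ b b' : B, ¬H.Adj (inr b) (inr b'))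
    (ra : A → A × B → ℕ) (rb : B → A × B → ℕ)
    (E : Finset (A × B)) (hE : ∀ p : A × B, p ∈ E ↔ H.Adj (inl p.1) (inr p.2))
    (hg : GoodR E ra rb)
    (hbound : ∀ e ∈ E, prefA E ra e + prefB E rb e + 1 ≤ (E.filter fun f => f.1 = e.1).card) :
    AChoosable H := by
  classical
  intro L hL
  have hdeg : ∀ a : A, (H.neighborSet (inl a)).ncard = (E.filter fun f => f.1 = a).card := by
    intro a
    have hset : H.neighborSet (inl a) =
        ↑((E.filter fun f => f.1 = a).image fun p => (inr p.2 : A ⊕ B)) := by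
      ext y
      simp only [SimpleGraph.mem_neighborSet, Finset.coe_image, Set.mem_image, Finset.mem_coe,
        Finset.mem_filter]
      constructor
      · intro hadj
        match y, hadj with
        | inl a', hadj => exact absurd hadj (hb1 a a')
        | inr b, hadj => exact ⟨(a, b), ⟨(hE (a, b)).mpr hadj, rfl⟩, rfl⟩
      · rintro ⟨p, ⟨hpE, hp1⟩, rfl⟩
        have := (hE p).mp hpE
        rwa [hp1] at this
    rw [hset, Set.ncard_coe_finset]
    apply Finset.card_image_of_injOn
    intro p hp q hq hpq
    obtain ⟨hpE, hp1⟩ := Finset.mem_filter.mp hp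
    obtain ⟨hqE, hq1⟩ := Finset.mem_filter.mp hq
    exact Prod.ext (hp1.trans hq1.symm) (Sum.inr_injective hpq)
  obtain ⟨C', hC'mem, hC'prop⟩ := galvin (∑ e ∈ E, (L s(inl e.1, inr e.2)).card) E
      (fun p => L s(inl p.1, inr p.2)) ra rb le_rfl hg (by
        intro e he
        have hadj := (hE e).mp he
        have h1 := hL e.1 e.2 hadj
        have hd := hdeg e.1
        have hb := hbound e he
        beta_reduce
        omega)
  have hcanon : ∀ e ∈ H.edgeSet, ∃ p : A × B, e = s(inl p.1, inr p.2) ∧ p ∈ E := by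
    intro e
    induction e with
    | _ x y =>
      intro he
      rw [SimpleGraph.mem_edgeSet] at he
      match x, y, he with
      | inl a, inl a', he => exact absurd he (hb1 a a')
      | inl a, inr b, he => exact ⟨(a, b), rfl, (hE _).mpr he⟩
      | inr b, inl a, he => exact ⟨(a, b), Sym2.eq_swap, (hE _).mpr he.symm⟩
      | inr b, inr b', he => exact absurd he (hb2 b b')
  refine ⟨Sym2.lift ⟨fun x y => match x, y with
    | inl a, inr b => C' (a, b)
    | inr b, inl a => C' (a, b)
    | inl _, inl _ => 0
    | inr _, inr _ => 0, by intro x y; cases x <;> cases y <;> rfl⟩, ?_, ?_⟩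
  · intro e he
    obtain ⟨p, rfl, hpE⟩ := hcanon e he
    exact hC'mem p hpE
  · rintro e f ⟨he, hf, hne, v, hve, hvf⟩
    obtain ⟨p, rfl, hpE⟩ := hcanon e he
    obtain ⟨q, rfl, hqE⟩ := hcanon f hf
    have hpq : p ≠ q := fun h => hne (by rw [h])
    have hshare : Shares p q := by
      rw [Sym2.mem_iff] at hve hvf
      rcases hve with h1 | h1 <;> rcases hvf with h2 | h2 <;> rw [h1] at h2
      · exact Or.inl (Sum.inl_injective h2)
      · exact absurd h2 (by simp)
      · exact absurd h2 (by simp)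
      · exact Or.inr (Sum.inr_injective h2)
    exact hC'prop p hpE q hqE hpq hshare


section Table

def tblList : List Nat := [0,0,0,0,0,0,0,0,0,0,0,0,0,0,0,0,0,0,0,0,0,0,0,0,0,0,0,0,0,0,0,0,0,0,0,0,0,0,0,0,0,0,0,0,0,0,0,0,0,0,0,0,0,0,0,0,0,0,0,0,0,0,0,2598,0,0,0,0,0,0,0,0,0,0,0,0,0,0,0,0,0,0,0,0,0,0,0,0,0,0,0,0,0,0,0,0,0,0,0,0,0,0,0,0,0,0,0,0,0,0,0,0,0,0,0,0,0,0,0,3246,0,0,0,0,0,0,2814,3246,0,0,0,0,0,0,0,0,0,0,0,0,0,0,0,0,0,0,0,0,0,0,0,0,0,0,0,0,0,0,0,0,0,0,0,0,0,0,0,0,0,0,0,0,0,0,0,4338,0,0,0,0,0,0,0,0,0,0,0,0,0,1752,0,4344,0,0,0,0,0,0,0,0,0,0,0,0,0,0,0,0,0,0,0,0,0,0,0,0,0,0,0,0,0,0,0,0,0,0,0,0,0,0,0,16273,0,0,0,0,0,0,3906,4770,0,0,0,0,0,726,0,5912,0,0,0,0,294,726,3912,4776,0,0,0,0,0,0,0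,0,0,0,0,0,0,0,0,0,0,0,0,0,0,0,0,0,0,0,0,0,0,0,0,23773,0,0,0,0,0,0,0,0,0,0,0,0,0,0,0,0,0,0,0,0,0,0,0,0,0,0,0,8232,0,0,0,23791,0,0,0,0,0,0,0,0,0,0,0,0,0,0,0,0,0,0,0,0,0,0,0,3348,0,0,0,0,0,0,2916,3780,0,0,0,0,0,0,0,0,0,0,0,0,0,0,0,0,0,0,0,756,0,0,0,31863,0,0,324,756,0,0,10710,11574,0,0,0,0,0,0,0,0,0,0,0,0,0,0,0,4356,0,0,0,0,0,0,0,0,0,0,0,0,0,1776,0,6962,0,0,0,0,0,0,0,0,0,0,0,8226,0,0,0,39333,0,0,0,0,0,0,0,0,0,1332,0,9528,0,9570,0,14756,0,0,0,0,0,0,0,3924,0,0,0,0,0,0,3924,4356,0,0,0,0,0,792,0,3384,0,0,0,0,360,1776,2952,3816,0,0,0,792,0,0,0,16381,0,0,360,8226,0,0,4014,4878,0,1332,0,792,0,834,0,6020,1332,1332,360,792,402,834,10746,11610]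

def permVal (p : ℕ) (k : Fin 3) : ℕ :=
  (([[0,1,2],[0,2,1],[1,0,2],[1,2,0],[2,0,1],[2,1,0]] : List (List ℕ)).getD p [0,1,2]).getD k.val 0

def tbl (n : ℕ) : ℕ := tblList.getD n 0

def bit (b : Bool) : ℕ := cond b 1 0

def encG (f : Fin 3 → Fin 3 → Bool) : ℕ :=
  bit (f 0 0) + 2 * bit (f 0 1) + 4 * bit (f 0 2) + 8 * bit (f 1 0) + 16 * bit (f 1 1) +
    32 * bit (f 1 2) + 64 * bit (f 2 0) + 128 * bit (f 2 1) + 256 * bit (f 2 2)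

def raOf (f : Fin 3 → Fin 3 → Bool) (i j : Fin 3) : ℕ :=
  permVal (tbl (encG f) / 6 ^ (i : ℕ) % 6) j
def rbOf (f : Fin 3 → Fin 3 → Bool) (j i : Fin 3) : ℕ :=
  permVal (tbl (encG f) / 6 ^ (3 + (j : ℕ)) % 6) i

def colDeg (f : Fin 3 → Fin 3 → Bool) (j : Fin 3) : ℕ :=
  (Finset.univ.filter fun i => f i j = true).card
def rowDeg (f : Fin 3 → Fin 3 → Bool) (i : Fin 3) : ℕ :=
  (Finset.univ.filter fun j => f i j = true).card
def cntA (f : Fin 3 → Fin 3 → Bool) (r : Fin 3 → Fin 3 → ℕ) (i j : Fin 3) : ℕ :=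
  (Finset.univ.filter fun j2 => f i j2 = true ∧ r i j2 < r i j).card
def cntB (f : Fin 3 → Fin 3 → Bool) (r : Fin 3 → Fin 3 → ℕ) (j i : Fin 3) : ℕ :=
  (Finset.univ.filter fun i2 => f i2 j = true ∧ r j i2 < r j i).card

set_option maxRecDepth 10000 in
theorem tbl_ok : ∀ f : Fin 3 → Fin 3 → Bool, (∀ j, 2 ≤ colDeg f j) →
    (∀ i, Function.Injective (raOf f i)) ∧ (∀ j, Function.Injective (rbOf f j)) ∧
    (∀ i j, f i j = true → cntA f (raOf f) i j + cntB f (rbOf f) j i + 1 ≤ rowDeg f i) := by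
  decide

end Table

end Stmt7Aux

open Stmt7Aux in
/-- a bipartite graph with parts `A` (= V) and `B` (= W) satisfying
`|A| ≤ |B| = 3` has a nonempty subset `W' ⊆ B` such that the induced subgraph
`G[W' ∪ N(W')]` is `N(W')`-choosable. -/
theorem stmt7 {A B : Type*} [Fintype A] [Fintype B]
    (G : SimpleGraph (A ⊕ B)) (hbip : IsBipartiteSum G)
    (hB : Fintype.card B = 3) (hA : Fintype.card A ≤ 3) :
    ∃ W' : Set B, W'.Nonempty ∧ AChoosable (restrictB G W') := by
  classical
  by_cases hcase : ∃ b0 : B, (Finset.univ.filter fun a : A => G.Adj (inl a) (inr b0)).card ≤ 1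
  · -- some B-vertex has degree at most one: take W' = {b0}
    obtain ⟨b0, hb0⟩ := hcase
    refine ⟨{b0}, ⟨b0, rfl⟩, ?_⟩
    set H := restrictB G {b0} with hH
    have hb1 : ∀ a a' : A, ¬H.Adj (inl a) (inl a') := fun a a' h => hbip.1 a a' h.1
    have hb2 : ∀ b b' : B, ¬H.Adj (inr b) (inr b') := fun b b' h => hbip.2 b b' h.1
    set E : Finset (A × B) := Finset.univ.filter (fun p => H.Adj (inl p.1) (inr p.2)) with hEdef
    have hE : ∀ p : A × B, p ∈ E ↔ H.Adj (inl p.1) (inr p.2) := by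
      intro p; simp [hEdef]
    have hcard : E.card ≤ 1 := by
      have hsub : E ⊆ (Finset.univ.filter fun a : A => G.Adj (inl a) (inr b0)).image
          (fun a => (a, b0)) := by
        intro p hp
        have h := (hE p).mp hp
        have hp2 : p.2 = b0 := h.2.2 p.2 rfl
        refine Finset.mem_image.mpr ⟨p.1, Finset.mem_filter.mpr ⟨Finset.mem_univ _, ?_⟩, ?_⟩
        · rw [← hp2]; exact h.1
        · exact Prod.ext rfl hp2.symm
      calc E.card ≤ _ := Finset.card_le_card hsub
        _ ≤ _ := Finset.card_image_le
        _ ≤ 1 := hb0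
    refine bridge H hb1 hb2 (fun _ _ => 0) (fun _ _ => 0) E hE ?_ ?_
    · intro e he f hf hne
      exact absurd (Finset.card_le_one.mp hcard e he f hf) hne
    · intro e he
      have h1 : 1 ≤ (E.filter fun f => f.1 = e.1).card :=
        Finset.card_pos.mpr ⟨e, Finset.mem_filter.mpr ⟨he, rfl⟩⟩
      have h2 : prefA E (fun (_ : A) (_ : A × B) => 0) e = 0 := by
        simp [prefA]
      have h3 : prefB E (fun (_ : B) (_ : A × B) => 0) e = 0 := by
        simp [prefB]
      omega
  · -- every B-vertex has degree at least two: take W' = univ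
    push_neg at hcase
    have hBne : Nonempty B := Fintype.card_pos_iff.mp (by omega)
    refine ⟨Set.univ, Set.univ_nonempty, ?_⟩
    set H := restrictB G Set.univ with hH
    have hb1 : ∀ a a' : A, ¬H.Adj (inl a) (inl a') := fun a a' h => hbip.1 a a' h.1
    have hb2 : ∀ b b' : B, ¬H.Adj (inr b) (inr b') := fun b b' h => hbip.2 b b' h.1
    set E : Finset (A × B) := Finset.univ.filter (fun p => H.Adj (inl p.1) (inr p.2)) with hEdef
    have hE : ∀ p : A × B, p ∈ E ↔ H.Adj (inl p.1) (inr p.2) := by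
      intro p; simp [hEdef]
    have hEG : ∀ p : A × B, p ∈ E ↔ G.Adj (inl p.1) (inr p.2) := by
      intro p
      rw [hE p]
      constructor
      · exact fun h => h.1
      · intro h
        exact ⟨h, fun b hb => Set.mem_univ b, fun b hb => Set.mem_univ b⟩
    obtain ⟨ιA⟩ : Nonempty (A ↪ Fin 3) :=
      Function.Embedding.nonempty_of_card_le (by simpa using hA)
    have eB : B ≃ Fin 3 := Fintype.equivFinOfCardEq hB
    set f : Fin 3 → Fin 3 → Bool :=
      fun i j => decide (∃ a, ιA a = i ∧ G.Adj (inl a) (inr (eB.symm j))) with hf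
    have hfspec : ∀ (a : A) (j : Fin 3), f (ιA a) j = true ↔ G.Adj (inl a) (inr (eB.symm j)) := by
      intro a j
      simp only [hf, decide_eq_true_eq]
      constructor
      · rintro ⟨a', ha', hadj⟩
        rwa [ιA.injective ha'] at hadj
      · exact fun h => ⟨a, rfl, h⟩
    have hcol : ∀ j, 2 ≤ colDeg f j := by
      intro j
      have h2 : 2 ≤ (Finset.univ.filter fun a : A => G.Adj (inl a) (inr (eB.symm j))).card := by
        have := hcase (eB.symm j); omega
      have hsub : (Finset.univ.filter fun a : A => G.Adj (inl a) (inr (eB.symm j))).image ιA ⊆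
          Finset.univ.filter (fun i => f i j = true) := by
        intro i hi
        obtain ⟨a, ha, rfl⟩ := Finset.mem_image.mp hi
        exact Finset.mem_filter.mpr ⟨Finset.mem_univ _,
          (hfspec a j).mpr (Finset.mem_filter.mp ha).2⟩
      calc (2 : ℕ) ≤ _ := h2
        _ = ((Finset.univ.filter fun a : A => G.Adj (inl a) (inr (eB.symm j))).image ιA).card :=
          (Finset.card_image_of_injective _ ιA.injective).symm
        _ ≤ _ := Finset.card_le_card hsub
    obtain ⟨hinjA, hinjB, hbnd⟩ := tbl_ok f hcol
    set ra : A → A × B → ℕ := fun a e => raOf f (ιA a) (eB e.2) with hra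
    set rb : B → A × B → ℕ := fun b e => rbOf f (eB b) (ιA e.1) with hrb
    have hmemf : ∀ p : A × B, p ∈ E → f (ιA p.1) (eB p.2) = true := by
      intro p hp
      rw [hfspec p.1 (eB p.2)]
      rw [Equiv.symm_apply_apply]
      exact (hEG p).mp hp
    have hgood : GoodR E ra rb := by
      intro e he g hg hne
      constructor
      · intro h1 heq
        apply hne
        simp only [hra] at heq
        have h2 : eB e.2 = eB g.2 := hinjA (ιA e.1) heq
        exact Prod.ext h1 (eB.injective h2)
      · intro h2 heq
        apply hne
        simp only [hrb] at heq
        have h1 : ιA e.1 = ιA g.1 := hinjB (eB e.2) heq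
        exact Prod.ext (ιA.injective h1) h2
    have hprefA : ∀ e ∈ E, prefA E ra e = cntA f (raOf f) (ιA e.1) (eB e.2) := by
      intro e he
      refine Finset.card_nbij' (fun g => eB g.2) (fun j2 => (e.1, eB.symm j2)) ?_ ?_ ?_ ?_
      · intro g hg
        obtain ⟨hgE, hg1, hglt⟩ := Finset.mem_filter.mp hg
        refine Finset.mem_filter.mpr ⟨Finset.mem_univ _, ?_, ?_⟩
        · have := hmemf g hgE
          rwa [hg1] at this
        · exact hglt
      · intro j2 hj2
        obtain ⟨-, hfj2, hlt⟩ := Finset.mem_filter.mp hj2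
        refine Finset.mem_filter.mpr ⟨?_, rfl, ?_⟩
        · exact (hEG _).mpr ((hfspec e.1 j2).mp hfj2)
        · simpa [hra, Equiv.apply_symm_apply] using hlt
      · intro g hg
        obtain ⟨hgE, hg1, -⟩ := Finset.mem_filter.mp hg
        exact Prod.ext hg1.symm (eB.symm_apply_apply g.2)
      · intro j2 hj2
        exact eB.apply_symm_apply j2
    have hprefB : ∀ e ∈ E, prefB E rb e = cntB f (rbOf f) (eB e.2) (ιA e.1) := by
      intro e he
      refine Finset.card_bij (fun g _ => ιA g.1) ?_ ?_ ?_
      · intro g hg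
        obtain ⟨hgE, hg2, hglt⟩ := Finset.mem_filter.mp hg
        refine Finset.mem_filter.mpr ⟨Finset.mem_univ _, ?_, ?_⟩
        · have := hmemf g hgE
          rwa [hg2] at this
        · exact hglt
      · intro g1 hg1 g2 hg2 heq
        obtain ⟨-, h12, -⟩ := Finset.mem_filter.mp hg1
        obtain ⟨-, h22, -⟩ := Finset.mem_filter.mp hg2
        exact Prod.ext (ιA.injective heq) (h12.trans h22.symm)
      · intro i2 hi2
        obtain ⟨-, hfi2, hlt⟩ := Finset.mem_filter.mp hi2
        obtain ⟨a, haA, hadj⟩ : ∃ a, ιA a = i2 ∧ G.Adj (inl a) (inr (eB.symm (eB e.2))) := by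
          simpa only [hf, decide_eq_true_eq] using hfi2
        rw [Equiv.symm_apply_apply] at hadj
        refine ⟨(a, e.2), Finset.mem_filter.mpr ⟨(hEG (a, e.2)).mpr hadj, rfl, ?_⟩, haA⟩
        simpa [hrb, haA] using hlt
    have hdegE : ∀ e ∈ E, (E.filter fun g => g.1 = e.1).card = rowDeg f (ιA e.1) := by
      intro e he
      refine Finset.card_nbij' (fun g => eB g.2) (fun j2 => (e.1, eB.symm j2)) ?_ ?_ ?_ ?_
      · intro g hg
        obtain ⟨hgE, hg1⟩ := Finset.mem_filter.mp hg
        refine Finset.mem_filter.mpr ⟨Finset.mem_univ _, ?_⟩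
        have := hmemf g hgE
        rwa [hg1] at this
      · intro j2 hj2
        obtain ⟨-, hfj2⟩ := Finset.mem_filter.mp hj2
        exact Finset.mem_filter.mpr ⟨(hEG _).mpr ((hfspec e.1 j2).mp hfj2), rfl⟩
      · intro g hg
        obtain ⟨hgE, hg1⟩ := Finset.mem_filter.mp hg
        exact Prod.ext hg1.symm (eB.symm_apply_apply g.2)
      · intro j2 hj2
        exact eB.apply_symm_apply j2
    refine bridge H hb1 hb2 ra rb E hE hgood ?_
    intro e he
    rw [hprefA e he, hprefB e he, hdegE e he]
    exact hbnd _ _ (hmemf e he)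
end

section
/- Let G be the graph with vertices {u, v1, v2, w1, w2} and edges {v1u, v1w1, v1w2, uw1, uw2, v2u, v2w1, v2w2} (the 4-wheel-like graph where w1w2 and v1v2 are non-edges). Let L be a list assignment with |L(v1u)| ≥ 2, |L(v2u)| ≥ 2, |L(v1w1)| ≥ 3, |L(v1w2)| ≥ 3, |L(v2w1)| ≥ 3, |L(v2w2)| ≥ 3, |L(uw1)| ≥ 5, |L(uw2)| ≥ 5. Then G has a proper L-edge-colouring. -/
/-!
Colour `uv₁` and `uv₂` first, with distinct colours `p` and `q`. The remaining edges form `K_{2,3}`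
with parts `{w₁, w₂}` and `{v₁, v₂, u}`; with `p` and `q` removed from the lists, its edges at `v₁`
and `v₂` keep at least two colours and those at `u` at least three. Such a `K_{2,3}` is colourable
unless `w₁v₁` and `w₁v₂` have the same list of two colours. If some colour `a` of `w₁v₁` is not
available at `w₁v₂`, colour the 4-cycle `v₁w₁v₂w₂` with `a` on `v₁w₁`, and then `uw₁` and `uw₂`.
That last step fails only when both are left with the same single colour, and then changing any
one colour of the 4-cycle makes it succeed; so if everything fails, each list of the 4-cycle is
pinned down to the colours around it, and the few configurations of that kind are coloured by
hand. If the two lists agree and have three colours, colour the triangle at `w₂` first.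

If the exception occurs both for `p` and for the other colour `p'` of `uv₁`, then
`L(v₁w₁) \ {p} = L(v₂w₁) \ {q}` with `|L(v₁w₁)| ≥ 3` puts `p` in `L(v₁w₁)` but not in `L(v₂w₁)`,
while `L(v₁w₁) \ {p'} = L(v₂w₁) \ {q'}` puts it in `L(v₂w₁)`.
-/

open SimpleGraph Sum

namespace Finset

variable {α : Type*} {s t : Finset α} {a b c : α} {n : ℕ}

theorem exists_ne_or_eq_singleton (hs : s.Nonempty) (ht : t.Nonempty) :
    (∃ x ∈ s, ∃ y ∈ t, x ≠ y) ∨ ∃ c, s = {c} ∧ t = {c} := by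
  refine or_iff_not_imp_left.2 fun hne => ?_
  have h : ∀ x ∈ s, ∀ y ∈ t, x = y := fun x hx y hy =>
    by_contra fun hxy => hne ⟨x, hx, y, hy, hxy⟩
  obtain ⟨c, hc⟩ := ht
  obtain ⟨x, hx⟩ := hs
  refine ⟨c, eq_singleton_iff_unique_mem.2 ⟨h x hx c hc ▸ hx, fun x' hx' => h x' hx' c hc⟩,
    eq_singleton_iff_unique_mem.2 ⟨hc, fun y hy => ?_⟩⟩
  rw [← h x hx y hy, h x hx c hc]

variable [DecidableEq α]

theorem le_card_erase_of_succ_le (h : n + 1 ≤ #s) : n ≤ #(s.erase a) := by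
  have := pred_card_le_card_erase (s := s) (a := a)
  omega

theorem eq_of_erase_eq_singleton (hs : 2 ≤ #s) (ha : s.erase a = {c}) (hb : s.erase b = {c}) :
    a = b := by
  by_contra hab
  have hsub : s ⊆ {c} := fun x hx => by
    by_cases hxa : x = a
    · subst hxa
      rw [← hb]
      exact mem_erase.2 ⟨hab, hx⟩
    · rw [← ha]
      exact mem_erase.2 ⟨hxa, hx⟩
  have := card_le_card hsub
  rw [card_singleton] at this
  omega

theorem mem_of_erase_erase_eq_singleton (hs : 3 ≤ #s) (h : (s.erase a).erase b = {c}) :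
    a ∈ s ∧ b ∈ s := by
  have h₁ : #((s.erase a).erase b) = 1 := by rw [h, card_singleton]
  constructor
  · by_contra ha
    rw [erase_eq_of_notMem ha] at h₁
    have := le_card_erase_of_succ_le (a := b) (n := 2) hs
    omega
  · by_contra hb
    rw [erase_eq_of_notMem fun h => hb (mem_of_mem_erase h)] at h₁
    have := le_card_erase_of_succ_le (a := a) (n := 2) hs
    omega

end Finset

open Finset

variable {α : Type*} {X₁ Y₁ Z₁ X₂ Y₂ Z₂ : Finset α}

/-- Proper colourings of the line graph of `K_{2,3}` with parts `{w₁, w₂}` and `{v₁, v₂, u}`: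
`xᵢ, yᵢ, zᵢ` are the colours of `wᵢv₁, wᵢv₂, wᵢu`. -/
def K23Colorable (X₁ Y₁ Z₁ X₂ Y₂ Z₂ : Finset α) : Prop :=
  ∃ x₁ ∈ X₁, ∃ y₁ ∈ Y₁, ∃ z₁ ∈ Z₁, ∃ x₂ ∈ X₂, ∃ y₂ ∈ Y₂, ∃ z₂ ∈ Z₂,
    x₁ ≠ y₁ ∧ x₁ ≠ z₁ ∧ y₁ ≠ z₁ ∧ x₂ ≠ y₂ ∧ x₂ ≠ z₂ ∧ y₂ ≠ z₂ ∧ x₁ ≠ x₂ ∧ y₁ ≠ y₂ ∧ z₁ ≠ z₂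

theorem K23Colorable.swap (h : K23Colorable Y₁ X₁ Z₁ Y₂ X₂ Z₂) :
    K23Colorable X₁ Y₁ Z₁ X₂ Y₂ Z₂ := by
  obtain ⟨y₁, hy₁, x₁, hx₁, z₁, hz₁, y₂, hy₂, x₂, hx₂, z₂, hz₂, h₁, h₂, h₃, h₄, h₅, h₆, h₇, h₈,
    h₉⟩ := h
  exact ⟨x₁, hx₁, y₁, hy₁, z₁, hz₁, x₂, hx₂, y₂, hy₂, z₂, hz₂,
    h₁.symm, h₃, h₂, h₄.symm, h₆, h₅, h₈, h₇, h₉⟩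

variable [DecidableEq α]

theorem k23Colorable_or_eq_singleton {x₁ y₁ x₂ y₂ : α} (hZ₁ : 3 ≤ #Z₁) (hZ₂ : 3 ≤ #Z₂)
    (hx₁ : x₁ ∈ X₁) (hy₁ : y₁ ∈ Y₁) (hx₂ : x₂ ∈ X₂) (hy₂ : y₂ ∈ Y₂)
    (h₁ : x₁ ≠ y₁) (h₂ : x₂ ≠ y₂) (hx : x₁ ≠ x₂) (hy : y₁ ≠ y₂) :
    K23Colorable X₁ Y₁ Z₁ X₂ Y₂ Z₂ ∨
      ∃ c, (Z₁.erase x₁).erase y₁ = {c} ∧ (Z₂.erase x₂).erase y₂ = {c} := by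
  have hne : ∀ {Z : Finset α} {a b : α}, 3 ≤ #Z → ((Z.erase a).erase b).Nonempty :=
    fun hZ => card_pos.1 (le_card_erase_of_succ_le (le_card_erase_of_succ_le hZ))
  refine (exists_ne_or_eq_singleton (hne hZ₁) (hne hZ₂)).imp_left ?_
  rintro ⟨z₁, hz₁, z₂, hz₂, hz⟩
  simp only [mem_erase] at hz₁ hz₂
  exact ⟨x₁, hx₁, y₁, hy₁, z₁, hz₁.2.2, x₂, hx₂, y₂, hy₂, z₂, hz₂.2.2,
    h₁, hz₁.2.1.symm, hz₁.1.symm, h₂, hz₂.2.1.symm, hz₂.1.symm, hx, hy, hz⟩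

theorem K23Colorable.of_three_le_card (hX₁ : 3 ≤ #X₁) (hZ₁ : 2 ≤ #Z₁) (hX₂ : X₂.Nonempty)
    (hY₂ : 2 ≤ #Y₂) (hZ₂ : 3 ≤ #Z₂) : K23Colorable X₁ X₁ Z₁ X₂ Y₂ Z₂ := by
  obtain ⟨x₂, hx₂⟩ := hX₂
  obtain ⟨y₂, hy₂, hyx⟩ := exists_mem_ne hY₂ x₂
  obtain ⟨z₂, hz₂⟩ : ((Z₂.erase x₂).erase y₂).Nonempty :=
    card_pos.1 (le_card_erase_of_succ_le (le_card_erase_of_succ_le hZ₂))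
  obtain ⟨z₁, hz₁, hz⟩ := exists_mem_ne hZ₁ z₂
  have hX₁' : 2 ≤ #(X₁.erase z₁) := le_card_erase_of_succ_le hX₁
  rcases exists_ne_or_eq_singleton (card_pos.1 (le_card_erase_of_succ_le (a := x₂) hX₁'))
      (card_pos.1 (le_card_erase_of_succ_le (a := y₂) hX₁')) with
    ⟨x₁, hx₁, y₁, hy₁, hne⟩ | ⟨c, hc₁, hc₂⟩
  · simp only [mem_erase] at hx₁ hy₁ hz₂
    exact ⟨x₁, hx₁.2.2, y₁, hy₁.2.2, z₁, hz₁, x₂, hx₂, y₂, hy₂, z₂, hz₂.2.2,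
      hne, hx₁.2.1, hy₁.2.1, hyx.symm, hz₂.2.1.symm, hz₂.1.symm, hx₁.1, hy₁.1, hz⟩
  · exact absurd (eq_of_erase_eq_singleton hX₁' hc₁ hc₂) hyx.symm

/-- What is left when the 4-cycle colouring `a, x₂, y₂, y₁` of `w₁v₁, w₂v₁, w₂v₂, w₁v₂` leaves
only `c` for both `w₁u` and `w₂u`, and none of its colours can be changed on its own. -/
theorem K23Colorable.of_rigid {a c x₂ y₁ y₂ : α} (hZ₁ : 3 ≤ #Z₁) (hZ₂ : 3 ≤ #Z₂)
    (ha : a ∈ X₁) (ha' : a ∉ Y₁) (hy₁ : y₁ ∈ Y₁) (hx₂ : x₂ ∈ X₂)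
    (hax : a ≠ x₂) (hxy : x₂ ≠ y₂) (hy : y₁ ≠ y₂)
    (hc₁ : (Z₁.erase a).erase y₁ = {c}) (hc₂ : (Z₂.erase x₂).erase y₂ = {c})
    (hX₁ : x₂ ∈ X₁ ∨ y₁ ∈ X₁) (hY₁ : y₂ ∈ Y₁) (hX₂ : a ∈ X₂ ∨ y₂ ∈ X₂)
    (hY₂ : x₂ ∈ Y₂ ∨ y₁ ∈ Y₂) :
    K23Colorable X₁ Y₁ Z₁ X₂ Y₂ Z₂ := by
  obtain ⟨haZ, hy₁Z⟩ := mem_of_erase_erase_eq_singleton hZ₁ hc₁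
  obtain ⟨-, hy₂Z⟩ := mem_of_erase_erase_eq_singleton hZ₂ hc₂
  have hcZ₁ : c ∈ (Z₁.erase a).erase y₁ := hc₁ ▸ mem_singleton_self c
  have hcZ₂ : c ∈ (Z₂.erase x₂).erase y₂ := hc₂ ▸ mem_singleton_self c
  simp only [mem_erase] at hcZ₁ hcZ₂
  have hay₁ : a ≠ y₁ := fun h => ha' (h ▸ hy₁)
  have hay₂ : a ≠ y₂ := fun h => ha' (h ▸ hY₁)
  by_cases hy₁Y₂ : y₁ ∈ Y₂ ∧ x₂ ≠ y₁
  · exact ⟨a, ha, y₂, hY₁, c, hcZ₁.2.2, x₂, hx₂, y₁, hy₁Y₂.1, y₂, hy₂Z, by grind⟩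
  have hx₂Y₂ : x₂ ∈ Y₂ := by grind
  rcases hX₂ with haX₂ | hy₂X₂
  · by_cases hy₁X₁ : y₁ ∈ X₁
    · exact ⟨y₁, hy₁X₁, y₂, hY₁, a, haZ, a, haX₂, x₂, hx₂Y₂, c, hcZ₂.2.2, by grind⟩
    · exact ⟨x₂, hX₁.resolve_right hy₁X₁, y₁, hy₁, a, haZ, a, haX₂, x₂, hx₂Y₂, c, hcZ₂.2.2,
        by grind⟩
  · exact ⟨a, ha, y₂, hY₁, y₁, hy₁Z, y₂, hy₂X₂, x₂, hx₂Y₂, c, hcZ₂.2.2, by grind⟩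

theorem K23Colorable.of_mem_of_notMem {a : α} (hX₁ : 2 ≤ #X₁) (hY₁ : 2 ≤ #Y₁) (hZ₁ : 3 ≤ #Z₁)
    (hX₂ : 2 ≤ #X₂) (hY₂ : 2 ≤ #Y₂) (hZ₂ : 3 ≤ #Z₂) (ha : a ∈ X₁) (ha' : a ∉ Y₁) :
    K23Colorable X₁ Y₁ Z₁ X₂ Y₂ Z₂ := by
  by_contra hfail
  have stuck : ∀ {x₁ y₁ x₂ y₂}, x₁ ∈ X₁ → y₁ ∈ Y₁ → x₂ ∈ X₂ → y₂ ∈ Y₂ →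
      x₁ ≠ y₁ → x₂ ≠ y₂ → x₁ ≠ x₂ → y₁ ≠ y₂ →
      ∃ c, (Z₁.erase x₁).erase y₁ = {c} ∧ (Z₂.erase x₂).erase y₂ = {c} :=
    fun hx₁ hy₁ hx₂ hy₂ h₁ h₂ hx hy =>
      (k23Colorable_or_eq_singleton hZ₁ hZ₂ hx₁ hy₁ hx₂ hy₂ h₁ h₂ hx hy).resolve_left hfail
  have hZ₁' : ∀ {b}, 2 ≤ #(Z₁.erase b) := le_card_erase_of_succ_le hZ₁
  have hZ₂' : ∀ {b}, 2 ≤ #(Z₂.erase b) := le_card_erase_of_succ_le hZ₂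
  have haY : ∀ {t}, t ∈ Y₁ → a ≠ t := fun ht h => ha' (h ▸ ht)
  obtain ⟨x₂, hx₂, hx₂a⟩ := exists_mem_ne hX₂ a
  obtain ⟨y₂, hy₂, hy₂x₂⟩ := exists_mem_ne hY₂ x₂
  obtain ⟨y₁, hy₁, hy₁y₂⟩ := exists_mem_ne hY₁ y₂
  obtain ⟨c, hc₁, hc₂⟩ := stuck ha hy₁ hx₂ hy₂ (haY hy₁) hy₂x₂.symm hx₂a.symm hy₁y₂
  -- Changing one colour of the 4-cycle changes what is left for only one of `w₁u, w₂u`, so by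
  -- `eq_of_erase_eq_singleton` that colour can only be replaced by one of its neighbours' colours.
  have hY₁' : y₂ ∈ Y₁ := by
    obtain ⟨t, ht, hty₁⟩ := exists_mem_ne hY₁ y₁
    refine by_contra fun hy₂Y₁ => hty₁ ?_
    obtain ⟨c', hc₁', hc₂'⟩ := stuck ha ht hx₂ hy₂ (haY ht) hy₂x₂.symm hx₂a.symm
      fun h => hy₂Y₁ (h ▸ ht)
    obtain rfl : c = c' := singleton_inj.1 (hc₂.symm.trans hc₂')
    exact eq_of_erase_eq_singleton hZ₁' hc₁' hc₁
  have hX₁' : x₂ ∈ X₁ ∨ y₁ ∈ X₁ := by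
    obtain ⟨t, ht, hta⟩ := exists_mem_ne hX₁ a
    refine or_iff_not_imp_left.2 fun hx₂X₁ => by_contra fun hy₁X₁ => hta ?_
    obtain ⟨c', hc₁', hc₂'⟩ := stuck ht hy₁ hx₂ hy₂ (fun h => hy₁X₁ (h ▸ ht)) hy₂x₂.symm
      (fun h => hx₂X₁ (h ▸ ht)) hy₁y₂
    obtain rfl : c = c' := singleton_inj.1 (hc₂.symm.trans hc₂')
    exact eq_of_erase_eq_singleton hZ₁' (erase_right_comm.trans hc₁')
      (erase_right_comm.trans hc₁)
  have hX₂' : a ∈ X₂ ∨ y₂ ∈ X₂ := by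
    obtain ⟨t, ht, htx₂⟩ := exists_mem_ne hX₂ x₂
    refine or_iff_not_imp_left.2 fun haX₂ => by_contra fun hy₂X₂ => htx₂ ?_
    obtain ⟨c', hc₁', hc₂'⟩ := stuck ha hy₁ ht hy₂ (haY hy₁) (fun h => hy₂X₂ (h ▸ ht))
      (fun h => haX₂ (h ▸ ht)) hy₁y₂
    obtain rfl : c = c' := singleton_inj.1 (hc₁.symm.trans hc₁')
    exact eq_of_erase_eq_singleton hZ₂' (erase_right_comm.trans hc₂')
      (erase_right_comm.trans hc₂)
  have hY₂' : x₂ ∈ Y₂ ∨ y₁ ∈ Y₂ := by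
    obtain ⟨t, ht, hty₂⟩ := exists_mem_ne hY₂ y₂
    refine or_iff_not_imp_left.2 fun hx₂Y₂ => by_contra fun hy₁Y₂ => hty₂ ?_
    obtain ⟨c', hc₁', hc₂'⟩ := stuck ha hy₁ hx₂ ht (haY hy₁) (fun h => hx₂Y₂ (h ▸ ht))
      hx₂a.symm fun h => hy₁Y₂ (h ▸ ht)
    obtain rfl : c = c' := singleton_inj.1 (hc₁.symm.trans hc₁')
    exact eq_of_erase_eq_singleton hZ₂' hc₂' hc₂
  exact hfail (K23Colorable.of_rigid hZ₁ hZ₂ ha ha' hy₁ hx₂ hx₂a.symm hy₂x₂.symm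
    hy₁y₂ hc₁ hc₂ hX₁' hY₁' hX₂' hY₂')

theorem eq_and_card_le_two_of_not_k23Colorable (hX₁ : 2 ≤ #X₁) (hY₁ : 2 ≤ #Y₁) (hZ₁ : 3 ≤ #Z₁)
    (hX₂ : 2 ≤ #X₂) (hY₂ : 2 ≤ #Y₂) (hZ₂ : 3 ≤ #Z₂) (h : ¬K23Colorable X₁ Y₁ Z₁ X₂ Y₂ Z₂) :
    X₁ = Y₁ ∧ #X₁ ≤ 2 := by
  have hXY : X₁ = Y₁ := Subset.antisymm
    (fun a ha => by_contra fun ha' =>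
      h (K23Colorable.of_mem_of_notMem hX₁ hY₁ hZ₁ hX₂ hY₂ hZ₂ ha ha'))
    (fun b hb => by_contra fun hb' =>
      h (K23Colorable.of_mem_of_notMem hY₁ hX₁ hZ₁ hY₂ hX₂ hZ₂ hb hb').swap)
  refine ⟨hXY, not_lt.1 fun h₃ => h ?_⟩
  subst hXY
  exact K23Colorable.of_three_le_card h₃ (by omega) (card_pos.1 (by omega)) hY₂ hZ₂

theorem exists_k23Colorable_erase {P Q : Finset α} (hP : 2 ≤ #P) (hQ : 2 ≤ #Q)
    (hX₁ : 3 ≤ #X₁) (hY₁ : 3 ≤ #Y₁) (hZ₁ : 5 ≤ #Z₁) (hX₂ : 3 ≤ #X₂) (hY₂ : 3 ≤ #Y₂)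
    (hZ₂ : 5 ≤ #Z₂) :
    ∃ p ∈ P, ∃ q ∈ Q, p ≠ q ∧ K23Colorable (X₁.erase p) (Y₁.erase q) ((Z₁.erase p).erase q)
      (X₂.erase p) (Y₂.erase q) ((Z₂.erase p).erase q) := by
  have reduce : ∀ p q, K23Colorable (X₁.erase p) (Y₁.erase q) ((Z₁.erase p).erase q)
      (X₂.erase p) (Y₂.erase q) ((Z₂.erase p).erase q) ∨
      X₁.erase p = Y₁.erase q ∧ #(X₁.erase p) ≤ 2 := fun p q =>
    or_iff_not_imp_left.2 <| eq_and_card_le_two_of_not_k23Colorable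
      (le_card_erase_of_succ_le hX₁) (le_card_erase_of_succ_le hY₁)
      (le_card_erase_of_succ_le (le_card_erase_of_succ_le hZ₁))
      (le_card_erase_of_succ_le hX₂) (le_card_erase_of_succ_le hY₂)
      (le_card_erase_of_succ_le (le_card_erase_of_succ_le hZ₂))
  obtain ⟨p, hp⟩ := card_pos.1 (by omega : 0 < #P)
  obtain ⟨q, hq, hqp⟩ := exists_mem_ne hQ p
  rcases reduce p q with h | ⟨hXY, hcard⟩
  · exact ⟨p, hp, q, hq, hqp.symm, h⟩
  have hpX : p ∈ X₁ := by_contra fun hpX => by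
    rw [erase_eq_of_notMem hpX] at hcard
    omega
  have hpY : p ∉ Y₁ := fun hpY => notMem_erase p X₁ (hXY ▸ mem_erase.2 ⟨hqp.symm, hpY⟩)
  obtain ⟨p', hp', hp'p⟩ := exists_mem_ne hP p
  obtain ⟨q', hq', hq'p'⟩ := exists_mem_ne hQ p'
  rcases reduce p' q' with h | ⟨hXY', -⟩
  · exact ⟨p', hp', q', hq', hq'p'.symm, h⟩
  exact absurd (mem_of_mem_erase (hXY' ▸ mem_erase.2 ⟨hp'p.symm, hpX⟩)) hpY

/-- With vertices `u = 0, v₁ = 1, v₂ = 2, w₁ = 3, w₂ = 4`, entry `(i, j)` colours the edge `ij`. -/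
def wheelColoring (p q x₁ x₂ y₁ y₂ z₁ z₂ : ℕ) : Sym2 (Fin 5) → ℕ :=
  Sym2.lift ⟨fun i j => ![![0, p, q, z₁, z₂], ![p, 0, 0, x₁, x₂], ![q, 0, 0, y₁, y₂],
    ![z₁, x₁, y₁, 0, 0], ![z₂, x₂, y₂, 0, 0]] i j,
    fun i j => by fin_cases i <;> fin_cases j <;> rfl⟩

theorem isListEdgeColoring_wheelColoring {L : Sym2 (Fin 5) → Finset ℕ}
    {p q x₁ x₂ y₁ y₂ z₁ z₂ : ℕ} (hp : p ∈ L s(1, 0)) (hq : q ∈ L s(2, 0))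
    (hx₁ : x₁ ∈ L s(1, 3)) (hx₂ : x₂ ∈ L s(1, 4)) (hy₁ : y₁ ∈ L s(2, 3)) (hy₂ : y₂ ∈ L s(2, 4))
    (hz₁ : z₁ ∈ L s(0, 3)) (hz₂ : z₂ ∈ L s(0, 4))
    (hu : [p, q, z₁, z₂].Nodup) (hv₁ : [p, x₁, x₂].Nodup) (hv₂ : [q, y₁, y₂].Nodup)
    (hw₁ : [x₁, y₁, z₁].Nodup) (hw₂ : [x₂, y₂, z₂].Nodup) :
    IsListEdgeColoring ((⊤ : SimpleGraph (Fin 5)).deleteEdges {s(1, 2), s(3, 4)}) L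
      (wheelColoring p q x₁ x₂ y₁ y₂ z₁ z₂) := by
  refine ⟨fun e he => ?_, ?_⟩
  · induction e using Sym2.ind with | _ i j => ?_
    fin_cases i <;> fin_cases j <;> simp [wheelColoring] at he ⊢ <;>
      first | assumption | (rw [Sym2.eq_swap]; assumption)
  · rintro e f ⟨he, hf, hef, v, hve, hvf⟩
    obtain ⟨w, rfl⟩ := Sym2.mem_iff_exists.1 hve
    obtain ⟨w', rfl⟩ := Sym2.mem_iff_exists.1 hvf
    simp only [List.nodup_cons, List.mem_cons, List.not_mem_nil] at hu hv₁ hv₂ hw₁ hw₂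
    simp only [SimpleGraph.mem_edgeSet, SimpleGraph.deleteEdges_adj, SimpleGraph.top_adj,
      Set.mem_insert_iff, Set.mem_singleton_iff, ne_eq, Sym2.eq_iff, true_and] at he hf hef
    simp only [wheelColoring, Sym2.lift_mk]
    fin_cases v <;> fin_cases w <;> fin_cases w' <;> simp at he hf hef ⊢ <;> grind

/-- the graph on vertices `u = 0, v₁ = 1, v₂ = 2, w₁ = 3, w₂ = 4`
which is `K₅` minus the perfect matching `{v₁v₂, w₁w₂}`, with list sizes
`|L(v₁u)|, |L(v₂u)| ≥ 2`, `|L(vᵢwⱼ)| ≥ 3`, `|L(uw₁)|, |L(uw₂)| ≥ 5`,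
has a proper list edge-colouring. -/
theorem stmt10 (G : SimpleGraph (Fin 5))
    (hG : G = (⊤ : SimpleGraph (Fin 5)).deleteEdges
      {s((1 : Fin 5), 2), s((3 : Fin 5), 4)})
    (L : Sym2 (Fin 5) → Finset ℕ)
    (h1 : 2 ≤ (L s((1 : Fin 5), 0)).card) (h2 : 2 ≤ (L s((2 : Fin 5), 0)).card)
    (h3 : 3 ≤ (L s((1 : Fin 5), 3)).card) (h4 : 3 ≤ (L s((1 : Fin 5), 4)).card)
    (h5 : 3 ≤ (L s((2 : Fin 5), 3)).card) (h6 : 3 ≤ (L s((2 : Fin 5), 4)).card)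
    (h7 : 5 ≤ (L s((0 : Fin 5), 3)).card) (h8 : 5 ≤ (L s((0 : Fin 5), 4)).card) :
    ∃ C, IsListEdgeColoring G L C := by
  obtain ⟨p, hp, q, hq, hpq, x₁, hx₁, y₁, hy₁, z₁, hz₁, x₂, hx₂, y₂, hy₂, z₂, hz₂, h⟩ :=
    exists_k23Colorable_erase h1 h2 h3 h5 h7 h4 h6 h8
  simp only [mem_erase] at hx₁ hy₁ hz₁ hx₂ hy₂ hz₂
  subst hG
  exact ⟨_, isListEdgeColoring_wheelColoring hp hq hx₁.2 hx₂.2 hy₁.2 hy₂.2 hz₁.2.2 hz₂.2.2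
    (by simp; grind) (by simp; grind) (by simp; grind) (by simp; grind) (by simp; grind)⟩
end

section
/- Every 3-tree G of maximum degree at most 5 is isomorphic to one of exactly four graphs: K4; K5 minus one edge; or one of the two 6-vertex 3-trees obtained from K5 minus an edge by adding a new vertex joined to a triangle. -/
open SimpleGraph Sum

/-- `G` is a 3-tree: there is a construction ordering `σ 0, σ 1, …` in which the
first four vertices form a `K₄` and each later vertex has exactly three earlier
neighbours, which form a triangle. -/
def Is3Tree {n : ℕ} (G : SimpleGraph (Fin n)) : Prop :=
  4 ≤ n ∧ ∃ σ : Equiv.Perm (Fin n),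
    (∀ i j : Fin n, i < j → (j : ℕ) < 4 → G.Adj (σ i) (σ j)) ∧
    ∀ j : Fin n, 4 ≤ (j : ℕ) →
      ({i : Fin n | i < j ∧ G.Adj (σ i) (σ j)}.ncard = 3 ∧
       ∀ i i' : Fin n, i < j → i' < j → i ≠ i' →
         G.Adj (σ i) (σ j) → G.Adj (σ i') (σ j) → G.Adj (σ i) (σ i'))

/-- `K₄`. -/
def Ga : SimpleGraph (Fin 4) := ⊤

/-- `K₅` minus one edge. -/
def Gb : SimpleGraph (Fin 5) := (⊤ : SimpleGraph (Fin 5)).deleteEdges {s((3 : Fin 5), 4)}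

/-- `K₅` minus an edge, plus a new vertex joined to the triangle `{0,1,2}`. -/
def Gc : SimpleGraph (Fin 6) :=
  SimpleGraph.fromEdgeSet
    ({e | ∃ i j : Fin 6, (i : ℕ) < 5 ∧ (j : ℕ) < 5 ∧ i ≠ j ∧ e ≠ s((3 : Fin 6), 4) ∧ e = s(i, j)} ∪
     {s((5 : Fin 6), 0), s((5 : Fin 6), 1), s((5 : Fin 6), 2)})

/-- `K₅` minus an edge, plus a new vertex joined to the triangle `{0,2,3}`. -/
def Gd : SimpleGraph (Fin 6) :=
  SimpleGraph.fromEdgeSet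
    ({e | ∃ i j : Fin 6, (i : ℕ) < 5 ∧ (j : ℕ) < 5 ∧ i ≠ j ∧ e ≠ s((3 : Fin 6), 4) ∧ e = s(i, j)} ∪
     {s((5 : Fin 6), 0), s((5 : Fin 6), 2), s((5 : Fin 6), 3)})

/-!
Put a 3-tree in construction order. The first five vertices span `K₅` minus an edge `r4`, and
the sixth vertex misses two of them, at least one of which is `r` or `4` (they are not adjacent,
so not both lie in its triangle). Hence the non-edges among the first six vertices form a triangle
or a path `P₄`, and any permutation carrying one placement of such a pattern to another is an
isomorphism: this gives `Gb`, `Gc` and `Gd`. In `Gc` and `Gd` every triangle contains a vertex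
adjacent to all others, so a seventh vertex, being attached to a triangle, would create a vertex
of degree six.
-/

namespace SimpleGraph

variable {V W : Type*}

lemma ext_of_lt [LinearOrder V] {G H : SimpleGraph V}
    (h : ∀ a b, a < b → (G.Adj a b ↔ H.Adj a b)) : G = H := by
  ext a b
  rcases lt_trichotomy a b with hab | rfl | hab
  · exact h a b hab
  · simp
  · rw [G.adj_comm, H.adj_comm]
    exact h b a hab

def IsUniversalVertex (G : SimpleGraph V) (v : V) : Prop :=
  ∀ w, w ≠ v → G.Adj v w

instance [Fintype V] [DecidableEq V] (G : SimpleGraph V) [DecidableRel G.Adj] :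
    DecidablePred G.IsUniversalVertex :=
  fun v => inferInstanceAs (Decidable (∀ w, w ≠ v → G.Adj v w))

def EveryTriangleHasUniversalVertex (G : SimpleGraph V) : Prop :=
  ∀ a b c, G.Adj a b → G.Adj b c → G.Adj a c →
    G.IsUniversalVertex a ∨ G.IsUniversalVertex b ∨ G.IsUniversalVertex c

instance [Fintype V] [DecidableEq V] (G : SimpleGraph V) [DecidableRel G.Adj] :
    Decidable G.EveryTriangleHasUniversalVertex :=
  inferInstanceAs (Decidable (∀ a b c, G.Adj a b → G.Adj b c → G.Adj a c →
    G.IsUniversalVertex a ∨ G.IsUniversalVertex b ∨ G.IsUniversalVertex c))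

lemma IsUniversalVertex.neighborSet_eq {G : SimpleGraph V} {v : V}
    (hv : G.IsUniversalVertex v) : G.neighborSet v = {v}ᶜ := by
  ext w
  exact ⟨fun h => (G.ne_of_adj h).symm, hv w⟩

lemma IsUniversalVertex.ncard_neighborSet [Finite V] {G : SimpleGraph V} {v : V}
    (hv : G.IsUniversalVertex v) : (G.neighborSet v).ncard = Nat.card V - 1 := by
  rw [hv.neighborSet_eq, Set.ncard_compl, Set.ncard_singleton]

lemma ncard_neighborSet_le_card_sub_one [Finite V] (G : SimpleGraph V) (v : V) :
    (G.neighborSet v).ncard ≤ Nat.card V - 1 := by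
  calc (G.neighborSet v).ncard ≤ ({v}ᶜ : Set V).ncard :=
        Set.ncard_le_ncard (fun w h => (G.ne_of_adj h).symm)
    _ = Nat.card V - 1 := by rw [Set.ncard_compl, Set.ncard_singleton]

lemma ncard_neighborSet_comap_le [Finite W] (G : SimpleGraph W) {f : V → W}
    (hf : f.Injective) (v : V) :
    ((G.comap f).neighborSet v).ncard ≤ (G.neighborSet (f v)).ncard := by
  rw [← Set.ncard_image_of_injective _ hf]
  exact Set.ncard_le_ncard (Set.image_subset_iff.mpr fun _ h => h)

namespace Iso

variable {G : SimpleGraph V} {H : SimpleGraph W}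

lemma isUniversalVertex_iff (φ : G ≃g H) {v : V} :
    H.IsUniversalVertex (φ v) ↔ G.IsUniversalVertex v := by
  refine ⟨fun h w hw => φ.map_adj_iff.mp (h _ (φ.injective.ne hw)), fun h w hw => ?_⟩
  obtain ⟨w, rfl⟩ := φ.surjective w
  exact φ.map_adj_iff.mpr (h w (ne_of_apply_ne φ hw))

lemma everyTriangleHasUniversalVertex (φ : G ≃g H) (hH : H.EveryTriangleHasUniversalVertex) :
    G.EveryTriangleHasUniversalVertex := by
  intro a b c hab hbc hac
  simpa only [φ.isUniversalVertex_iff] using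
    hH (φ a) (φ b) (φ c) (φ.map_adj_iff.mpr hab) (φ.map_adj_iff.mpr hbc)
      (φ.map_adj_iff.mpr hac)

lemma ncard_neighborSet (φ : G ≃g H) (v : V) :
    (H.neighborSet (φ v)).ncard = (G.neighborSet v).ncard := by
  rw [← Nat.card_coe_set_eq, ← Nat.card_coe_set_eq]
  exact Nat.card_congr (φ.mapNeighborSet v).symm

def topDeleteEdges (σ : V ≃ W) {E : Set (Sym2 V)} {E' : Set (Sym2 W)}
    (h : Sym2.map σ '' E = E') :
    (⊤ : SimpleGraph V).deleteEdges E ≃g (⊤ : SimpleGraph W).deleteEdges E' where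
  toEquiv := σ
  map_rel_iff' {a b} := by
    subst h
    rw [deleteEdges_adj, deleteEdges_adj, ← Sym2.map_mk,
      (Sym2.map.injective σ.injective).mem_set_image]
    simp

lemma nonempty_topDeleteEdges_image {ι : Type*} [Finite ι] {f g : ι → V}
    (hf : f.Injective) (hg : g.Injective) (E : Set (Sym2 ι)) :
    Nonempty ((⊤ : SimpleGraph V).deleteEdges (Sym2.map f '' E) ≃g
      (⊤ : SimpleGraph V).deleteEdges (Sym2.map g '' E)) := by
  obtain ⟨σ, hσ⟩ := Equiv.Perm.exists_extending_pair f g hf hg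
  refine ⟨topDeleteEdges σ ?_⟩
  rw [Set.image_image]
  simp only [Sym2.map_map]
  congr! with e
  exact funext hσ

end Iso

end SimpleGraph

def IsOrdered3Tree {n : ℕ} (G : SimpleGraph (Fin n)) : Prop :=
  (∀ i j : Fin n, i < j → (j : ℕ) < 4 → G.Adj i j) ∧
  ∀ j : Fin n, 4 ≤ (j : ℕ) →
    ({i : Fin n | i < j ∧ G.Adj i j}.ncard = 3 ∧
     ∀ i i' : Fin n, i < j → i' < j → i ≠ i' → G.Adj i j → G.Adj i' j → G.Adj i i')

lemma is3Tree_iff {n : ℕ} {G : SimpleGraph (Fin n)} :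
    Is3Tree G ↔ 4 ≤ n ∧ ∃ σ : Equiv.Perm (Fin n), IsOrdered3Tree (G.comap σ) :=
  Iff.rfl

lemma is3Tree_of_isOrdered3Tree {n : ℕ} {G : SimpleGraph (Fin n)} (hn : 4 ≤ n)
    (hG : IsOrdered3Tree G) : Is3Tree G :=
  is3Tree_iff.mpr ⟨hn, 1, by simpa using hG⟩

lemma isOrdered3Tree_iff_card {n : ℕ} {G : SimpleGraph (Fin n)} [DecidableRel G.Adj] :
    IsOrdered3Tree G ↔
      (∀ i j : Fin n, i < j → (j : ℕ) < 4 → G.Adj i j) ∧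
      ∀ j : Fin n, 4 ≤ (j : ℕ) →
        ((Finset.univ.filter fun i => i < j ∧ G.Adj i j).card = 3 ∧
         ∀ i i' : Fin n, i < j → i' < j → i ≠ i' →
           G.Adj i j → G.Adj i' j → G.Adj i i') := by
  simp only [IsOrdered3Tree, ← Set.ncard_coe_finset, Finset.coe_filter, Finset.mem_univ, true_and]

instance {n : ℕ} (G : SimpleGraph (Fin n)) [DecidableRel G.Adj] : Decidable (IsOrdered3Tree G) :=
  decidable_of_iff _ isOrdered3Tree_iff_card.symm

namespace IsOrdered3Tree

variable {n : ℕ} {G : SimpleGraph (Fin n)}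

lemma comap_castLE (hG : IsOrdered3Tree G) {m : ℕ} (h : m ≤ n) :
    IsOrdered3Tree (G.comap (Fin.castLE h)) := by
  refine ⟨fun i j hij hj => hG.1 _ _ hij hj, fun j hj => ⟨?_, fun i i' hi hi' hne =>
    (hG.2 _ hj).2 _ _ hi hi' ((Fin.castLE_injective h).ne hne)⟩⟩
  rw [← (hG.2 (Fin.castLE h j) hj).1, ← Set.ncard_image_of_injective _ (Fin.castLE_injective h)]
  congr 1
  ext i
  simp only [Set.mem_image, Set.mem_ofPred_eq, SimpleGraph.comap_adj]
  constructor
  · rintro ⟨i, hi, rfl⟩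
    exact hi
  · rintro ⟨hi, hadj⟩
    exact ⟨⟨i, Nat.lt_trans hi j.isLt⟩, ⟨hi, hadj⟩, rfl⟩

lemma ncard_setOf_lt_and_not_adj (hG : IsOrdered3Tree G) (j : Fin n) (hj : 4 ≤ (j : ℕ)) :
    {i : Fin n | i < j ∧ ¬G.Adj i j}.ncard = j - 3 := by
  have hsplit : {i : Fin n | i < j ∧ ¬G.Adj i j} = Set.Iio j \ {i | i < j ∧ G.Adj i j} := by
    ext i
    simp only [Set.mem_ofPred_eq, Set.mem_sdiff, Set.mem_Iio]
    tauto
  rw [hsplit, Set.ncard_sdiff (fun i hi => hi.1), (hG.2 j hj).1, Set.ncard_eq_toFinset_card',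
    Set.toFinset_Iio, Fin.card_Iio]

lemma exists_setOf_lt_and_not_adj_eq_singleton (hG : IsOrdered3Tree G) (j : Fin n)
    (hj : (j : ℕ) = 4) : ∃ r, {i | i < j ∧ ¬G.Adj i j} = {r} :=
  Set.ncard_eq_one.mp (by rw [hG.ncard_setOf_lt_and_not_adj j hj.ge, hj])

lemma eq_top_four {G : SimpleGraph (Fin 4)} (hG : IsOrdered3Tree G) : G = ⊤ :=
  SimpleGraph.ext_of_lt fun a b hab => iff_of_true (hG.1 a b hab b.isLt) hab.ne

lemma eq_topDeleteEdges_five {G : SimpleGraph (Fin 5)} (hG : IsOrdered3Tree G) :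
    ∃ r : Fin 5, r < 4 ∧ G = (⊤ : SimpleGraph (Fin 5)).deleteEdges {s(r, 4)} := by
  obtain ⟨r, hr⟩ := hG.exists_setOf_lt_and_not_adj_eq_singleton 4 rfl
  have h4 : ∀ a, a < 4 ∧ ¬G.Adj a 4 ↔ a = r := fun a => Set.ext_iff.mp hr a
  refine ⟨r, ((h4 r).mpr rfl).1, SimpleGraph.ext_of_lt fun a b hab => ?_⟩
  simp only [deleteEdges_adj, top_adj, Set.mem_singleton_iff, Sym2.eq_iff]
  by_cases hb : b < 4
  · have := hG.1 a b hab hb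
    grind
  · obtain rfl : b = 4 := by grind
    have := h4 a
    grind

/-- The non-edges form the triangle `p q 5` if `z = p`, and the path `p q 5 z` otherwise. -/
lemma eq_topDeleteEdges_six {G : SimpleGraph (Fin 6)} (hG : IsOrdered3Tree G) :
    ∃ p q z : Fin 6, p ≠ q ∧ p ≠ 5 ∧ q ≠ 5 ∧ z ≠ q ∧ z ≠ 5 ∧
      G = (⊤ : SimpleGraph (Fin 6)).deleteEdges {s(p, q), s(q, 5), s(z, 5)} := by
  obtain ⟨r, hr⟩ := hG.exists_setOf_lt_and_not_adj_eq_singleton 4 rfl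
  obtain ⟨x, y, hxy, h5⟩ := Set.ncard_eq_two.mp (hG.ncard_setOf_lt_and_not_adj 5 (by decide))
  have hM4 : ∀ a, a < 4 ∧ ¬G.Adj a 4 ↔ a = r := fun a => Set.ext_iff.mp hr a
  have hM5 : ∀ a, a < 5 ∧ ¬G.Adj a 5 ↔ a = x ∨ a = y := fun a => Set.ext_iff.mp h5 a
  have hr4 := (hM4 r).mpr rfl
  have hx5 := (hM5 x).mpr (Or.inl rfl)
  have hy5 := (hM5 y).mpr (Or.inr rfl)
  have hmeet : x = r ∨ x = 4 ∨ y = r ∨ y = 4 := by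
    by_contra! h
    have hr5 : G.Adj r 5 := by grind
    have h45 : G.Adj 4 5 := by grind
    exact hr4.2 ((hG.2 5 (by decide)).2 r 4 (by grind) (by decide) (by grind) hr5 h45)
  have hG_eq : G = (⊤ : SimpleGraph (Fin 6)).deleteEdges {s(r, 4), s(x, 5), s(y, 5)} := by
    refine SimpleGraph.ext_of_lt fun a b hab => ?_
    simp only [deleteEdges_adj, top_adj, Set.mem_insert_iff, Set.mem_singleton_iff, Sym2.eq_iff]
    by_cases hb : b < 4
    · have := hG.1 a b hab hb
      grind
    · have := hM4 a
      have := hM5 a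
      obtain rfl | rfl : b = 4 ∨ b = 5 := by grind
      · grind
      · grind
  have hr5 : r ≠ 5 := by grind
  rcases hmeet with rfl | rfl | rfl | rfl
  · exact ⟨4, x, y, by grind, by decide, by grind, hxy.symm, by grind,
      by rw [hG_eq, Sym2.eq_swap]⟩
  · exact ⟨r, 4, y, by grind, hr5, by decide, hxy.symm, by grind, hG_eq⟩
  · exact ⟨4, y, x, by grind, by decide, by grind, hxy, by grind,
      by rw [hG_eq, Sym2.eq_swap, Set.pair_comm s(x, 5)]⟩
  · exact ⟨r, 4, x, by grind, hr5, by decide, hxy, by grind,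
      by rw [hG_eq, Set.pair_comm s(x, 5)]⟩

end IsOrdered3Tree

lemma Gb_eq_topDeleteEdges : Gb = (⊤ : SimpleGraph (Fin 5)).deleteEdges {s(3, 4)} := rfl

lemma Gc_eq_topDeleteEdges :
    Gc = (⊤ : SimpleGraph (Fin 6)).deleteEdges {s(3, 4), s(4, 5), s(3, 5)} := by
  ext a b
  simp only [Gc, fromEdgeSet_adj, deleteEdges_adj, top_adj, Set.mem_union, Set.mem_ofPred_eq,
    Set.mem_insert_iff, Set.mem_singleton_iff]
  fin_cases a <;> fin_cases b <;> simp <;> decide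

lemma Gd_eq_topDeleteEdges :
    Gd = (⊤ : SimpleGraph (Fin 6)).deleteEdges {s(3, 4), s(4, 5), s(1, 5)} := by
  ext a b
  simp only [Gd, fromEdgeSet_adj, deleteEdges_adj, top_adj, Set.mem_union, Set.mem_ofPred_eq,
    Set.mem_insert_iff, Set.mem_singleton_iff]
  fin_cases a <;> fin_cases b <;> simp <;> decide

lemma isOrdered3Tree_Ga : IsOrdered3Tree Ga := by
  unfold Ga; decide

lemma isOrdered3Tree_Gb : IsOrdered3Tree Gb := by
  rw [Gb_eq_topDeleteEdges]; decide

lemma isOrdered3Tree_Gc : IsOrdered3Tree Gc := by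
  rw [Gc_eq_topDeleteEdges]; decide

lemma isOrdered3Tree_Gd : IsOrdered3Tree Gd := by
  rw [Gd_eq_topDeleteEdges]; decide

lemma Gc_everyTriangleHasUniversalVertex : Gc.EveryTriangleHasUniversalVertex := by
  rw [Gc_eq_topDeleteEdges]; decide

lemma Gd_everyTriangleHasUniversalVertex : Gd.EveryTriangleHasUniversalVertex := by
  rw [Gd_eq_topDeleteEdges]; decide

lemma nonempty_topDeleteEdges_iso_Gb {r : Fin 5} (hr : r ≠ 4) :
    Nonempty ((⊤ : SimpleGraph (Fin 5)).deleteEdges {s(r, 4)} ≃g Gb) := by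
  have := SimpleGraph.Iso.nonempty_topDeleteEdges_image (f := ![r, 4]) (g := ![3, 4])
    (injective_pair_iff_ne.mpr hr) (by decide) {s(0, 1)}
  simpa [Gb_eq_topDeleteEdges] using this

lemma nonempty_topDeleteEdges_iso_Gc {p q : Fin 6} (hpq : p ≠ q) (hp : p ≠ 5) (hq : q ≠ 5) :
    Nonempty ((⊤ : SimpleGraph (Fin 6)).deleteEdges {s(p, q), s(q, 5), s(p, 5)} ≃g Gc) := by
  have := SimpleGraph.Iso.nonempty_topDeleteEdges_image (f := ![p, q, 5]) (g := ![3, 4, 5])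
    (by intro i j h; fin_cases i <;> fin_cases j <;> simp_all [eq_comm]) (by decide)
    {s(0, 1), s(1, 2), s(0, 2)}
  simpa [Set.image_insert_eq, Gc_eq_topDeleteEdges] using this

lemma nonempty_topDeleteEdges_iso_Gd {p q z : Fin 6} (hpq : p ≠ q) (hp : p ≠ 5) (hq : q ≠ 5)
    (hzp : z ≠ p) (hzq : z ≠ q) (hz : z ≠ 5) :
    Nonempty ((⊤ : SimpleGraph (Fin 6)).deleteEdges {s(p, q), s(q, 5), s(z, 5)} ≃g Gd) := by
  have := SimpleGraph.Iso.nonempty_topDeleteEdges_image (f := ![p, q, 5, z]) (g := ![3, 4, 5, 1])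
    (by intro i j h; fin_cases i <;> fin_cases j <;> simp_all [eq_comm]) (by decide)
    {s(0, 1), s(1, 2), s(3, 2)}
  simpa [Set.image_insert_eq, Gd_eq_topDeleteEdges] using this

lemma not_nonempty_iso_of_card_ne {m k : ℕ} {A : SimpleGraph (Fin m)} {B : SimpleGraph (Fin k)}
    (h : m ≠ k) : ¬Nonempty (A ≃g B) :=
  fun ⟨φ⟩ => h (Fin.equiv_iff_eq.mp ⟨φ.toEquiv⟩)

lemma not_nonempty_iso_Gc_Gd : ¬Nonempty (Gc ≃g Gd) := by
  rintro ⟨φ⟩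
  have hGc : ∀ v : Fin 6, v < 3 → Gc.IsUniversalVertex v := by
    rw [Gc_eq_topDeleteEdges]; decide
  have hGd : ∀ v : Fin 6, Gd.IsUniversalVertex v → v = 0 ∨ v = 2 := by
    rw [Gd_eq_topDeleteEdges]; decide
  have h0 := hGd _ (φ.isUniversalVertex_iff.mpr (hGc 0 (by decide)))
  have h1 := hGd _ (φ.isUniversalVertex_iff.mpr (hGc 1 (by decide)))
  have h2 := hGd _ (φ.isUniversalVertex_iff.mpr (hGc 2 (by decide)))
  have h01 : φ 0 ≠ φ 1 := φ.injective.ne (by decide)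
  have h02 : φ 0 ≠ φ 2 := φ.injective.ne (by decide)
  have h12 : φ 1 ≠ φ 2 := φ.injective.ne (by decide)
  grind

namespace IsOrdered3Tree

lemma nonempty_iso_Gb {G : SimpleGraph (Fin 5)} (hG : IsOrdered3Tree G) :
    Nonempty (G ≃g Gb) := by
  obtain ⟨r, hr, rfl⟩ := hG.eq_topDeleteEdges_five
  exact nonempty_topDeleteEdges_iso_Gb hr.ne

lemma nonempty_iso_Gc_or_Gd {G : SimpleGraph (Fin 6)} (hG : IsOrdered3Tree G) :
    Nonempty (G ≃g Gc) ∨ Nonempty (G ≃g Gd) := by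
  obtain ⟨p, q, z, hpq, hp, hq, hzq, hz, rfl⟩ := hG.eq_topDeleteEdges_six
  by_cases hzp : z = p
  · subst hzp
    exact Or.inl (nonempty_topDeleteEdges_iso_Gc hpq hp hq)
  · exact Or.inr (nonempty_topDeleteEdges_iso_Gd hpq hp hq hzp hzq hz)

lemma everyTriangleHasUniversalVertex_six {G : SimpleGraph (Fin 6)} (hG : IsOrdered3Tree G) :
    G.EveryTriangleHasUniversalVertex := by
  rcases hG.nonempty_iso_Gc_or_Gd with h | h
  · exact h.some.everyTriangleHasUniversalVertex Gc_everyTriangleHasUniversalVertex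
  · exact h.some.everyTriangleHasUniversalVertex Gd_everyTriangleHasUniversalVertex

lemma exists_isUniversalVertex_seven {G : SimpleGraph (Fin 7)} (hG : IsOrdered3Tree G) :
    ∃ u, G.IsUniversalVertex u := by
  have h67 : 6 ≤ 7 := by norm_num
  have lift : ∀ a : Fin 7, a < 6 → ∃ a' : Fin 6, Fin.castLE h67 a' = a :=
    fun a ha => ⟨⟨a, ha⟩, rfl⟩
  obtain ⟨x, y, z, hxy, hxz, hyz, hT⟩ := Set.ncard_eq_three.mp (hG.2 6 (by decide)).1
  have hx : x < 6 ∧ G.Adj x 6 := (Set.ext_iff.mp hT x).mpr (by simp)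
  have hy : y < 6 ∧ G.Adj y 6 := (Set.ext_iff.mp hT y).mpr (by simp)
  have hz : z < 6 ∧ G.Adj z 6 := (Set.ext_iff.mp hT z).mpr (by simp)
  have tri := (hG.2 6 (by decide)).2
  obtain ⟨x, rfl⟩ := lift x hx.1
  obtain ⟨y, rfl⟩ := lift y hy.1
  obtain ⟨z, rfl⟩ := lift z hz.1
  obtain ⟨u, hu6, hu⟩ : ∃ u : Fin 6, G.Adj (Fin.castLE h67 u) 6 ∧
      (G.comap (Fin.castLE h67)).IsUniversalVertex u := by
    rcases (hG.comap_castLE h67).everyTriangleHasUniversalVertex_six x y z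
      (tri _ _ hx.1 hy.1 hxy hx.2 hy.2) (tri _ _ hy.1 hz.1 hyz hy.2 hz.2)
      (tri _ _ hx.1 hz.1 hxz hx.2 hz.2) with h | h | h
    exacts [⟨x, hx.2, h⟩, ⟨y, hy.2, h⟩, ⟨z, hz.2, h⟩]
  refine ⟨Fin.castLE h67 u, fun w hw => ?_⟩
  by_cases hw6 : w = 6
  · exact hw6 ▸ hu6
  · obtain ⟨w, rfl⟩ := lift w (by grind)
    exact hu w (fun h => hw (h ▸ rfl))

lemma exists_six_le_ncard_neighborSet {n : ℕ} {G : SimpleGraph (Fin n)} (hG : IsOrdered3Tree G)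
    (hn : 7 ≤ n) : ∃ v, 6 ≤ (G.neighborSet v).ncard := by
  obtain ⟨u, hu⟩ := (hG.comap_castLE hn).exists_isUniversalVertex_seven
  refine ⟨Fin.castLE hn u, ?_⟩
  calc 6 = ((G.comap (Fin.castLE hn)).neighborSet u).ncard := by simp [hu.ncard_neighborSet]
    _ ≤ _ := G.ncard_neighborSet_comap_le (Fin.castLE_injective hn) u

lemma nonempty_iso {n : ℕ} {G : SimpleGraph (Fin n)} (hG : IsOrdered3Tree G) (hn : 4 ≤ n)
    (hdeg : ∀ v, (G.neighborSet v).ncard ≤ 5) :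
    Nonempty (G ≃g Ga) ∨ Nonempty (G ≃g Gb) ∨
      Nonempty (G ≃g Gc) ∨ Nonempty (G ≃g Gd) := by
  obtain rfl | rfl | rfl | h7 : n = 4 ∨ n = 5 ∨ n = 6 ∨ 7 ≤ n := by omega
  · exact Or.inl ⟨hG.eq_top_four ▸ Iso.refl⟩
  · exact Or.inr (Or.inl hG.nonempty_iso_Gb)
  · exact Or.inr (Or.inr hG.nonempty_iso_Gc_or_Gd)
  · obtain ⟨v, hv⟩ := hG.exists_six_le_ncard_neighborSet h7
    exact absurd (hdeg v) (by omega)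

end IsOrdered3Tree

lemma Is3Tree.nonempty_iso {n : ℕ} {G : SimpleGraph (Fin n)} (hG : Is3Tree G)
    (hdeg : ∀ v, (G.neighborSet v).ncard ≤ 5) :
    Nonempty (G ≃g Ga) ∨ Nonempty (G ≃g Gb) ∨
      Nonempty (G ≃g Gc) ∨ Nonempty (G ≃g Gd) := by
  obtain ⟨hn, σ, hσ⟩ := is3Tree_iff.mp hG
  let φ := Iso.comap σ G
  have hdegσ : ∀ v, ((G.comap σ).neighborSet v).ncard ≤ 5 :=
    fun v => φ.ncard_neighborSet v ▸ hdeg (φ v)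
  exact (hσ.nonempty_iso hn hdegσ).imp (.map φ.symm.trans)
    (.imp (.map φ.symm.trans) (.imp (.map φ.symm.trans) (.map φ.symm.trans)))

/-- the 3-trees of maximum degree at most 5 are exactly the four
graphs `K₄`, `K₅` minus an edge, and the two 6-vertex 3-trees obtained from
`K₅` minus an edge by adding a vertex joined to a triangle; moreover these four
graphs are pairwise non-isomorphic 3-trees of maximum degree at most 5. -/
theorem stmt11 :
    (∀ (n : ℕ) (G : SimpleGraph (Fin n)), Is3Tree G →
      (∀ v, (G.neighborSet v).ncard ≤ 5) →
      (Nonempty (G ≃g Ga) ∨ Nonempty (G ≃g Gb) ∨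
       Nonempty (G ≃g Gc) ∨ Nonempty (G ≃g Gd))) ∧
    (Is3Tree Ga ∧ (∀ v, (Ga.neighborSet v).ncard ≤ 5)) ∧
    (Is3Tree Gb ∧ (∀ v, (Gb.neighborSet v).ncard ≤ 5)) ∧
    (Is3Tree Gc ∧ (∀ v, (Gc.neighborSet v).ncard ≤ 5)) ∧
    (Is3Tree Gd ∧ (∀ v, (Gd.neighborSet v).ncard ≤ 5)) ∧
    (¬Nonempty (Ga ≃g Gb) ∧ ¬Nonempty (Ga ≃g Gc) ∧ ¬Nonempty (Ga ≃g Gd) ∧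
     ¬Nonempty (Gb ≃g Gc) ∧ ¬Nonempty (Gb ≃g Gd) ∧ ¬Nonempty (Gc ≃g Gd)) := by
  have hdeg : ∀ {m : ℕ} (H : SimpleGraph (Fin m)), m ≤ 6 →
      ∀ v, (H.neighborSet v).ncard ≤ 5 :=
    fun H hm v => (H.ncard_neighborSet_le_card_sub_one v).trans (by simp; omega)
  refine ⟨fun n G hG => hG.nonempty_iso,
    ⟨is3Tree_of_isOrdered3Tree le_rfl isOrdered3Tree_Ga, hdeg Ga (by norm_num)⟩,
    ⟨is3Tree_of_isOrdered3Tree (by norm_num) isOrdered3Tree_Gb, hdeg Gb (by norm_num)⟩,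
    ⟨is3Tree_of_isOrdered3Tree (by norm_num) isOrdered3Tree_Gc, hdeg Gc le_rfl⟩,
    ⟨is3Tree_of_isOrdered3Tree (by norm_num) isOrdered3Tree_Gd, hdeg Gd le_rfl⟩,
    not_nonempty_iso_of_card_ne (by norm_num), not_nonempty_iso_of_card_ne (by norm_num),
    not_nonempty_iso_of_card_ne (by norm_num), not_nonempty_iso_of_card_ne (by norm_num),
    not_nonempty_iso_of_card_ne (by norm_num), not_nonempty_iso_Gc_Gd⟩
end

section
/- The complete graph K4 is 3-edge-choosable, i.e. for every assignment of lists of size at least 3 to the edges of K4 there is a proper edge-colouring choosing each edge's colour from its list. -/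
/-!
The six edges of `K₄` split into three perfect matchings, and two edges are adjacent exactly
when they lie in different matchings, so the line graph of `K₄` is the octahedron `K₂,₂,₂`.
The cocktail-party graph `K₂,…,₂` with `n` parts is `n`-choosable. If the two lists of some
part share a colour `x`, give both vertices of that part the colour `x`, delete `x` from the
remaining lists and induct on `n`. Otherwise the two lists of every part are disjoint, so a set
of vertices containing a whole part sees at least `2n` colours, and a set meeting each part at
most once has at most `n` vertices: Hall's condition holds and the vertices receive pairwise
distinct colours from their lists.
-/

open SimpleGraph Sum

/-- The chromatic index of `G`: the least number of colours in a proper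
edge-colouring. -/
noncomputable def chromIndex {V : Type*} (G : SimpleGraph V) : ℕ :=
  sInf {k | ∃ C : Sym2 V → ℕ, (∀ e ∈ G.edgeSet, C e < k) ∧
    ∀ e f, EdgeAdj G e f → C e ≠ C f}

/-- `G` is `k`-edge-choosable. -/
def EdgeChoosable {V : Type*} (G : SimpleGraph V) (k : ℕ) : Prop :=
  ∀ L : Sym2 V → Finset ℕ, (∀ e ∈ G.edgeSet, k ≤ (L e).card) →
    ∃ C, IsListEdgeColoring G L C

/-- The list chromatic index of `G`. -/
noncomputable def listChromIndex {V : Type*} (G : SimpleGraph V) : ℕ :=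
  sInf {k | EdgeChoosable G k}

open Finset Function

section CocktailParty

variable {ι α : Type*}

def IsCocktailPartyListColoring (L : ι × Bool → Finset α) (c : ι × Bool → α) : Prop :=
  (∀ v, c v ∈ L v) ∧ ∀ v w, v.1 ≠ w.1 → c v ≠ c w

lemma injOn_fst_of_not_both_mem {u : Finset (ι × Bool)}
    (h : ∀ i, ¬((i, false) ∈ u ∧ (i, true) ∈ u)) : Set.InjOn Prod.fst (u : Set (ι × Bool)) := by
  rintro ⟨i, b⟩ hv ⟨j, b'⟩ hw (rfl : i = j)
  cases b <;> cases b'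
  · rfl
  · exact absurd ⟨hv, hw⟩ (h i)
  · exact absurd ⟨hw, hv⟩ (h i)
  · rfl

lemma card_le_card_biUnion_of_disjoint [Fintype ι] [DecidableEq α] {L : ι × Bool → Finset α}
    (hL : ∀ v, Fintype.card ι ≤ #(L v)) (hdisj : ∀ i, Disjoint (L (i, false)) (L (i, true)))
    (u : Finset (ι × Bool)) : #u ≤ #(u.biUnion L) := by
  by_cases hpair : ∃ i, (i, false) ∈ u ∧ (i, true) ∈ u
  · obtain ⟨i, hf, ht⟩ := hpair
    calc #u ≤ Fintype.card (ι × Bool) := card_le_univ u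
      _ = Fintype.card ι + Fintype.card ι := by simp [Fintype.card_prod, mul_two]
      _ ≤ #(L (i, false)) + #(L (i, true)) := add_le_add (hL _) (hL _)
      _ = #(L (i, false) ∪ L (i, true)) := (card_union_of_disjoint (hdisj i)).symm
      _ ≤ #(u.biUnion L) := card_le_card (union_subset (subset_biUnion_of_mem L hf)
          (subset_biUnion_of_mem L ht))
  · obtain rfl | ⟨v, hv⟩ := u.eq_empty_or_nonempty
    · simp
    calc #u ≤ Fintype.card ι :=
          card_le_card_of_injOn Prod.fst (fun _ _ ↦ mem_coe.2 (mem_univ _))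
            (injOn_fst_of_not_both_mem (not_exists.1 hpair)) |>.trans_eq (card_univ)
      _ ≤ #(L v) := hL v
      _ ≤ #(u.biUnion L) := card_le_card (subset_biUnion_of_mem L hv)

lemma exists_injective_mem_of_disjoint [Fintype ι] [DecidableEq α] {L : ι × Bool → Finset α}
    (hL : ∀ v, Fintype.card ι ≤ #(L v)) (hdisj : ∀ i, Disjoint (L (i, false)) (L (i, true))) :
    ∃ c : ι × Bool → α, Injective c ∧ ∀ v, c v ∈ L v :=
  (all_card_le_biUnion_card_iff_exists_injective L).1
    (card_le_card_biUnion_of_disjoint hL hdisj)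

lemma IsCocktailPartyListColoring.extend [DecidableEq ι] [DecidableEq α]
    {L : ι × Bool → Finset α} {i : ι} {x : α} (hxf : x ∈ L (i, false)) (hxt : x ∈ L (i, true))
    {c : {j // j ≠ i} × Bool → α}
    (hc : IsCocktailPartyListColoring (fun v ↦ (L (v.1.1, v.2)).erase x) c) :
    IsCocktailPartyListColoring L fun v ↦ if h : v.1 = i then x else c (⟨v.1, h⟩, v.2) := by
  have hcx : ∀ v, c v ≠ x := fun v ↦ ne_of_mem_erase (hc.1 v)
  refine ⟨fun ⟨j, b⟩ ↦ ?_, fun ⟨j, b⟩ ⟨k, b'⟩ hjk ↦ ?_⟩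
  · dsimp only
    split_ifs with hj
    · subst hj; cases b <;> assumption
    · exact mem_of_mem_erase (hc.1 _)
  · dsimp only at hjk ⊢
    split_ifs with hj hk hk
    · exact absurd (hj.trans hk.symm) hjk
    · exact (hcx _).symm
    · exact hcx _
    · exact hc.2 _ _ fun h ↦ hjk (congrArg Subtype.val h)

theorem cocktailParty_listColorable [Fintype ι] [DecidableEq α] (L : ι × Bool → Finset α)
    (hL : ∀ v, Fintype.card ι ≤ #(L v)) : ∃ c, IsCocktailPartyListColoring L c := by
  induction hn : Fintype.card ι using Nat.strong_induction_on generalizing ι with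
  | _ n ih =>
  classical
  by_cases hmeet : ∃ i, (L (i, false) ∩ L (i, true)).Nonempty
  · obtain ⟨i, x, hx⟩ := hmeet
    rw [mem_inter] at hx
    have hcard : Fintype.card {j // j ≠ i} = n - 1 := by simp [hn]
    have hpos : 0 < n := hn ▸ Fintype.card_pos_iff.2 ⟨i⟩
    obtain ⟨c, hc⟩ := ih _ (by omega) (fun v ↦ (L (v.1.1, v.2)).erase x) (fun v ↦ by
      have := hL (v.1.1, v.2); have := pred_card_le_card_erase (s := L (v.1.1, v.2)) (a := x)
      omega) hcard
    exact ⟨_, hc.extend hx.1 hx.2⟩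
  · obtain ⟨c, hinj, hc⟩ := exists_injective_mem_of_disjoint (hn ▸ hL) fun i ↦
      disjoint_iff_inter_eq_empty.2 (not_nonempty_iff_eq_empty.1 (not_exists.1 hmeet i))
    exact ⟨c, hc, fun v w hvw ↦ hinj.ne fun h ↦ hvw (congrArg Prod.fst h)⟩

end CocktailParty

theorem edgeChoosable_of_edge_pairing {V ι : Type*} [Fintype ι] {G : SimpleGraph V}
    (ε : ι × Bool → Sym2 V) (hε : ∀ v, ε v ∈ G.edgeSet)
    (hsurj : ∀ e ∈ G.edgeSet, ∃ v, ε v = e)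
    (hpart : ∀ v w, v.1 = w.1 → ¬EdgeAdj G (ε v) (ε w)) :
    EdgeChoosable G (Fintype.card ι) := by
  classical
  intro L hL
  obtain ⟨c, hmem, hne⟩ := cocktailParty_listColorable (L ∘ ε) fun v ↦ hL _ (hε v)
  choose p hp using hsurj
  refine ⟨fun e ↦ if he : e ∈ G.edgeSet then c (p e he) else 0, fun e he ↦ ?_, fun e f hef ↦ ?_⟩
  · simpa [he, hp e he] using hmem (p e he)
  · obtain ⟨he, hf, -⟩ := id hef
    simp only [he, hf, dite_true]
    exact hne _ _ fun h ↦ hpart _ _ h (by rwa [hp, hp])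

def k4Matching : Fin 3 × Bool → Sym2 (Fin 4)
  | (i, false) => ![s(0, 1), s(0, 2), s(0, 3)] i
  | (i, true) => ![s(2, 3), s(1, 3), s(1, 2)] i

lemma k4Matching_mem_edgeSet (v : Fin 3 × Bool) :
    k4Matching v ∈ (⊤ : SimpleGraph (Fin 4)).edgeSet := by
  rw [edgeSet_top]; revert v; decide

lemma exists_k4Matching_eq (e : Sym2 (Fin 4)) (he : e ∈ (⊤ : SimpleGraph (Fin 4)).edgeSet) :
    ∃ v, k4Matching v = e := by
  rw [edgeSet_top] at he; revert e; decide

lemma not_edgeAdj_k4Matching (v w : Fin 3 × Bool) (h : v.1 = w.1) :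
    ¬EdgeAdj ⊤ (k4Matching v) (k4Matching w) := by
  rintro ⟨-, -, hne, x, hxv, hxw⟩
  revert v w x; decide

/-- `K₄` is 3-edge-choosable. -/
theorem stmt13 : EdgeChoosable (⊤ : SimpleGraph (Fin 4)) 3 :=
  edgeChoosable_of_edge_pairing k4Matching k4Matching_mem_edgeSet exists_k4Matching_eq
    not_edgeAdj_k4Matching
end
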